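/- arXiv:1101.1019 — 5 statements merged into one kernel-verified Lean document; each statement's English description precedes it below -/
import Mathlib

section
/- Symmetric Ekeland principle I. In the abstract symmetrization framework, let S' be a closed subset of S such that u^H ∈ S' for all u ∈ S' and H ∈ ℋ*, and u* ∈ S' for all u ∈ S'. Let f : S' → ℝ ∪ {+∞} be a proper, bounded below, lower semicontinuous functional such that f(u^H) ≤ f(u) for all u ∈ S' and all H ∈ ℋ*. Then for all ρ > 0 and σ > 0 and every u ∈ S' with f(u) ≤ inf_{S'} f + σρ, there exists v ∈ S' such that: (a) ‖v − v*‖_V < (2K+1)ρ; (b) f(w) ≥ f(v) − σ‖w − v‖ for all w ∈ S'; (c) f(v) ≤ f(u); (d) ‖v − u‖ ≤ ρ + ‖T_ρ u − u‖. -/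
/-!
Start from `u₀ = T_ρ u`: polarizations do not increase `f`, so `u₀` is still a `σρ`-almost
minimizer, and Ekeland's variational principle yields `v` with (b), (c) and `‖v - u₀‖ ≤ ρ`;
(d) is then the triangle inequality. Symmetrization is nonexpansive in `V` on `S`, being the limit
of iterated polarizations, which are; hence
`‖v - v*‖_V ≤ ‖v - u₀‖_V + ‖u₀ - u₀*‖_V + ‖u₀* - v*‖_V < Kρ + ρ + Kρ`, since `u₀* = u*`.
-/

open Filter Topology Metric Set

section Ekeland

variable {M : Type*} [MetricSpace M] {g : M → ℝ} {σ : ℝ}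

def ekelandCone (g : M → ℝ) (σ : ℝ) (x : M) : Set M :=
  {y | g y + σ * dist y x ≤ g x}

lemma mem_ekelandCone {x y : M} : y ∈ ekelandCone g σ x ↔ g y + σ * dist y x ≤ g x :=
  Iff.rfl

lemma mem_ekelandCone_self (x : M) : x ∈ ekelandCone g σ x := by
  simp [mem_ekelandCone]

lemma ekelandCone_trans (hσ : 0 ≤ σ) {x y z : M} (hy : y ∈ ekelandCone g σ x)
    (hz : z ∈ ekelandCone g σ y) : z ∈ ekelandCone g σ x := by
  rw [mem_ekelandCone] at *
  nlinarith [dist_triangle z y x]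

lemma LowerSemicontinuous.isClosed_ekelandCone (hg : LowerSemicontinuous g) (σ : ℝ) (x : M) :
    IsClosed (ekelandCone g σ x) :=
  (hg.add (continuous_const.mul (continuous_id.dist continuous_const)).lowerSemicontinuous)
    |>.isClosed_preimage (g x)

lemma exists_mem_ekelandCone_subset_closedBall (hbdd : BddBelow (range g)) (hσ : 0 < σ)
    (x : M) {ε : ℝ} (hε : 0 < ε) :
    ∃ y ∈ ekelandCone g σ x, ekelandCone g σ y ⊆ closedBall y ε := by
  -- `y` minimizes `g` on `ekelandCone g σ x` up to `σ * ε`, and its own cone lies inside that one.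
  obtain ⟨_, ⟨y, hy, rfl⟩, hy_lt⟩ := exists_lt_of_csInf_lt
    ((nonempty_of_mem (mem_ekelandCone_self x)).image g) (lt_add_of_pos_right _ (mul_pos hσ hε))
  refine ⟨y, hy, fun z hz => ?_⟩
  have hz_inf : sInf (g '' ekelandCone g σ x) ≤ g z :=
    csInf_le (hbdd.mono (image_subset_range _ _)) ⟨z, ekelandCone_trans hσ.le hy hz, rfl⟩
  have : σ * dist z y ≤ σ * ε := by
    rw [mem_ekelandCone] at hz
    linarith
  exact mem_closedBall.2 (le_of_mul_le_mul_left this hσ)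

theorem ekeland_variational_principle [CompleteSpace M] (hg : LowerSemicontinuous g)
    (hbdd : BddBelow (range g)) (hσ : 0 < σ) (x₀ : M) :
    ∃ v ∈ ekelandCone g σ x₀, ∀ w, g v ≤ g w + σ * dist w v := by
  choose next hnext_mem hnext_sub using fun x (n : ℕ) =>
    exists_mem_ekelandCone_subset_closedBall hbdd hσ x (Nat.one_div_pos_of_nat (n := n))
  let s : ℕ → M := fun n => Nat.rec x₀ (fun n x => next x n) n
  have hs_mono : ∀ n m, n ≤ m → s m ∈ ekelandCone g σ (s n) := fun n m hnm => by
    induction m, hnm using Nat.le_induction with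
    | base => exact mem_ekelandCone_self _
    | succ m _ ih => exact ekelandCone_trans hσ.le ih (hnext_mem _ _)
  have hs_ball : ∀ n m, n ≤ m → dist (s (n + 1)) (s (m + 1)) ≤ 1 / (n + 1) := fun n m hnm =>
    dist_comm (s (n + 1)) _ ▸ hnext_sub (s n) n (hs_mono _ _ (Nat.succ_le_succ hnm))
  obtain ⟨v, hv⟩ := cauchySeq_tendsto_of_complete
    (cauchySeq_of_le_tendsto_0' _ hs_ball tendsto_one_div_add_atTop_nhds_zero_nat)
  have hv_mem : ∀ n, v ∈ ekelandCone g σ (s n) := fun n =>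
    (hg.isClosed_ekelandCone σ (s n)).mem_of_tendsto hv
      (eventually_atTop.2 ⟨n, fun m hm => hs_mono n (m + 1) (by omega)⟩)
  refine ⟨v, hv_mem 0, fun w => ?_⟩
  by_contra! hw
  -- `w` and `v` lie in every cone `ekelandCone g σ (s (n + 1))`, whose radius tends to `0`.
  have hdist : ∀ n : ℕ, dist w v ≤ 2 * (1 / (n + 1)) := fun n => by
    have hw' := hnext_sub (s n) n (ekelandCone_trans hσ.le (hv_mem (n + 1)) hw.le)
    have hv' := hnext_sub (s n) n (hv_mem (n + 1))
    rw [mem_closedBall] at hw' hv'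
    linarith [dist_triangle_right w v (next (s n) n)]
  have hwv : dist w v ≤ 0 := by
    simpa using ge_of_tendsto' (tendsto_one_div_add_atTop_nhds_zero_nat.const_mul 2) hdist
  rw [dist_le_zero.1 hwv, dist_self] at hw
  linarith

end Ekeland

namespace EReal

lemma coe_toReal_min {x : EReal} (hx : x ≠ ⊥) (c : ℝ) : ((min x c).toReal : EReal) = min x c :=
  coe_toReal (min_le_right x c |>.trans_lt (coe_lt_top c)).ne (lt_min hx.bot_lt (bot_lt_coe c)).ne'

end EReal

lemma LowerSemicontinuous.toReal_min {α : Type*} [TopologicalSpace α] {f : α → EReal}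
    (hf : LowerSemicontinuous f) (hf_bot : ∀ x, f x ≠ ⊥) (c : ℝ) :
    LowerSemicontinuous fun x => (min (f x) c).toReal := by
  intro x a (ha : a < _)
  rw [← EReal.coe_lt_coe_iff, EReal.coe_toReal_min (hf_bot x)] at ha
  filter_upwards [hf.inf lowerSemicontinuous_const x a ha] with y hy
  show a < _
  rwa [← EReal.coe_lt_coe_iff, EReal.coe_toReal_min (hf_bot y)]

lemma bddBelow_range_toReal_min {α : Type*} {f : α → EReal} {c : ℝ} (hc : ∀ x, (c : EReal) ≤ f x)
    (b : ℝ) : BddBelow (range fun x => (min (f x) b).toReal) := ⟨min c b, by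
  rintro _ ⟨x, rfl⟩
  rw [← EReal.coe_le_coe_iff, EReal.coe_toReal_min ((EReal.bot_lt_coe c).trans_le (hc x)).ne']
  exact le_min ((EReal.coe_le_coe_iff.2 (min_le_left _ _)).trans (hc x))
    (EReal.coe_le_coe_iff.2 (min_le_right _ _))⟩

theorem ekeland_variational_principle_ereal {M : Type*} [MetricSpace M] [CompleteSpace M]
    {C : Set M} (hC : IsClosed C) {f : M → EReal} (hf : LowerSemicontinuousOn f C) {c : ℝ}
    (hc : ∀ x ∈ C, (c : EReal) ≤ f x) {σ ρ : ℝ} (hσ : 0 < σ) {x₀ : M} (hx₀ : x₀ ∈ C)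
    (hfx₀ : f x₀ ≠ ⊤) (hx₀_inf : f x₀ ≤ (⨅ x : C, f x) + ((σ * ρ : ℝ) : EReal)) :
    ∃ v ∈ C, f v ≤ f x₀ ∧ dist v x₀ ≤ ρ ∧
      ∀ w ∈ C, f v - ((σ * dist w v : ℝ) : EReal) ≤ f w := by
  have := hC.completeSpace_coe
  have hf_bot : ∀ x ∈ C, f x ≠ ⊥ := fun x hx => ((EReal.bot_lt_coe c).trans_le (hc x hx)).ne'
  -- Truncating `f` at level `f x₀ + 1` makes it real-valued without changing it below `f x₀`.
  set b := (f x₀).toReal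
  have hb : (b : EReal) = f x₀ := EReal.coe_toReal hfx₀ (hf_bot x₀ hx₀)
  let g : C → ℝ := fun x => (min (f x) ((b + 1 : ℝ) : EReal)).toReal
  have hg : ∀ x : C, (g x : EReal) = min (f x) ((b + 1 : ℝ) : EReal) := fun x =>
    EReal.coe_toReal_min (hf_bot x x.2) _
  obtain ⟨v, hv₀, hv⟩ := ekeland_variational_principle (g := g)
    ((lowerSemicontinuous_restrict_iff.2 hf).toReal_min (fun x => hf_bot x x.2) (b + 1))
    (bddBelow_range_toReal_min (fun x : C => hc x x.2) (b + 1)) hσ ⟨x₀, hx₀⟩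
  have hgx₀ : g ⟨x₀, hx₀⟩ = b := by
    have : (g ⟨x₀, hx₀⟩ : EReal) = b := by
      rw [hg, hb, min_eq_left (by rw [← hb]; exact_mod_cast (lt_add_one b).le)]
    exact_mod_cast this
  rw [mem_ekelandCone, hgx₀, Subtype.dist_eq] at hv₀
  have hgv : g v ≤ b := by nlinarith [dist_nonneg (x := v.1) (y := x₀)]
  have hfv : f v = g v := by
    have hlt : min (f v) ((b + 1 : ℝ) : EReal) < ((b + 1 : ℝ) : EReal) := by
      rw [← hg]; exact_mod_cast (by linarith)
    rw [hg, min_eq_left ((min_lt_iff.1 hlt).resolve_right (lt_irrefl _)).le]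
  refine ⟨v, v.2, by rw [hfv, ← hb]; exact_mod_cast hgv, ?_, fun w hw => ?_⟩
  · have hb_le : b ≤ g v + σ * ρ := by
      have : (b : EReal) ≤ ((g v + σ * ρ : ℝ) : EReal) := by
        rw [hb, EReal.coe_add, ← hfv]
        exact hx₀_inf.trans (add_le_add_left (iInf_le (fun x : C => f x) v) _)
      exact_mod_cast this
    exact le_of_mul_le_mul_left (by linarith) hσ
  · refine EReal.sub_le_of_le_add ?_
    have := hv ⟨w, hw⟩
    rw [Subtype.dist_eq] at this
    calc f v = g v := hfv
      _ ≤ ((g ⟨w, hw⟩ + σ * dist w v : ℝ) : EReal) := by exact_mod_cast this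
      _ ≤ f w + ((σ * dist w v : ℝ) : EReal) := by
        rw [EReal.coe_add, hg]
        exact add_le_add_left (min_le_left _ _) _

section IteratedPolarization

variable {α P : Type*} {pol : α → P → α} {S : Set α}

lemma apply_foldl_le {β : Type*} [Preorder β] {f : α → β} (hS : ∀ u ∈ S, ∀ H, pol u H ∈ S)
    (hf : ∀ u ∈ S, ∀ H, f (pol u H) ≤ f u) (l : List P) {u : α} (hu : u ∈ S) :
    f (l.foldl pol u) ≤ f u := by
  induction l generalizing u with
  | nil => exact le_rfl
  | cons H l ih => exact (ih (hS u hu H)).trans (hf u hu H)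

variable {β : Type*} [PseudoMetricSpace β] {e : α → β}

lemma dist_apply_foldl_le (hS : ∀ u ∈ S, ∀ H, pol u H ∈ S)
    (he : ∀ u ∈ S, ∀ v ∈ S, ∀ H, dist (e (pol u H)) (e (pol v H)) ≤ dist (e u) (e v))
    (l : List P) {u v : α} (hu : u ∈ S) (hv : v ∈ S) :
    dist (e (l.foldl pol u)) (e (l.foldl pol v)) ≤ dist (e u) (e v) := by
  induction l generalizing u v with
  | nil => exact le_rfl
  | cons H l ih => exact (ih (hS u hu H) (hS v hv H)).trans (he u hu v hv H)

lemma dist_apply_le_of_tendsto_foldl (hS : ∀ u ∈ S, ∀ H, pol u H ∈ S)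
    (he : ∀ u ∈ S, ∀ v ∈ S, ∀ H, dist (e (pol u H)) (e (pol v H)) ≤ dist (e u) (e v))
    {sy : α → α} {Hs : ℕ → P}
    (hsy : ∀ u ∈ S, Tendsto (fun m => e (((List.range m).map Hs).foldl pol u)) atTop (𝓝 (e (sy u))))
    {u v : α} (hu : u ∈ S) (hv : v ∈ S) :
    dist (e (sy u)) (e (sy v)) ≤ dist (e u) (e v) :=
  le_of_tendsto ((hsy u hu).dist (hsy v hv))
    (Eventually.of_forall fun _ => dist_apply_foldl_le hS he _ hu hv)

end IteratedPolarization

theorem symmetric_ekeland_I_general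
    {X : Type*} [NormedAddCommGroup X] [NormedSpace ℝ X] [CompleteSpace X]
    {V : Type*} [NormedAddCommGroup V] [NormedSpace ℝ V]
    (ι : X →L[ℝ] V)
    (K : ℝ) (hK : 0 < K) (hιK : ∀ u : X, ‖ι u‖ ≤ K * ‖u‖)
    (S : Set X)
    {P : Type*}
    (pol : X → P → X) (sy : X → X)
    (hpolS : ∀ u ∈ S, ∀ H : P, pol u H ∈ S)
    (happrox : ∃ Hs : ℕ → P, ∀ u ∈ S,
      Filter.Tendsto (fun m => ι (List.foldl pol u ((List.range m).map Hs)))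
        Filter.atTop (nhds (ι (sy u))))
    (hpolContr : ∀ u ∈ S, ∀ v ∈ S, ∀ H : P, ‖ι (pol u H) - ι (pol v H)‖ ≤ ‖ι u - ι v‖)
    (T : ℝ → X → X)
    (hTpol : ∀ ρ > (0:ℝ), ∀ u ∈ S, ∃ l : List P, T ρ u = List.foldl pol u l)
    (hTsy : ∀ ρ > (0:ℝ), ∀ u ∈ S, sy (T ρ u) = sy u)
    (hTapprox : ∀ ρ > (0:ℝ), ∀ u ∈ S, ‖ι (T ρ u) - ι (sy u)‖ < ρ)
    (S' : Set X) (hS'S : S' ⊆ S) (hS'closed : IsClosed S')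
    (hS'pol : ∀ u ∈ S', ∀ H : P, pol u H ∈ S')
    (hTS' : ∀ ρ > (0:ℝ), ∀ u ∈ S', T ρ u ∈ S')
    (f : X → EReal)
    (hfproper : ∃ u ∈ S', f u ≠ ⊤)
    (hfbdd : ∃ c : ℝ, ∀ u ∈ S', (c : EReal) ≤ f u)
    (hflsc : LowerSemicontinuousOn f S')
    (hfpol : ∀ u ∈ S', ∀ H : P, f (pol u H) ≤ f u)
    (ρ σ : ℝ) (hρ : 0 < ρ) (hσ : 0 < σ)
    (u : X) (hu : u ∈ S')
    (hfu : f u ≤ (⨅ w : S', f w) + ((σ * ρ : ℝ) : EReal)) :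
    ∃ v ∈ S',
      ‖ι v - ι (sy v)‖ < (2 * K + 1) * ρ ∧
      (∀ w ∈ S', f v - ((σ * ‖w - v‖ : ℝ) : EReal) ≤ f w) ∧
      f v ≤ f u ∧
      ‖v - u‖ ≤ ρ + ‖T ρ u - u‖ := by
  obtain ⟨Hs, hHs⟩ := happrox
  obtain ⟨c, hc⟩ := hfbdd
  obtain ⟨u', hu', hfu'⟩ := hfproper
  obtain ⟨l, hl⟩ := hTpol ρ hρ u (hS'S hu)
  have hu₀ : T ρ u ∈ S' := hTS' ρ hρ u hu
  have hfu₀ : f (T ρ u) ≤ f u := hl ▸ apply_foldl_le hS'pol hfpol l hu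
  have hfu_top : f u ≠ ⊤ := ne_top_of_le_ne_top (EReal.add_lt_top hfu' (EReal.coe_ne_top _)).ne
    (hfu.trans (add_le_add (iInf_le (fun w : S' => f w) ⟨u', hu'⟩) le_rfl))
  obtain ⟨v, hv, hfv, hdist, hmin⟩ := ekeland_variational_principle_ereal hS'closed hflsc hc hσ
    hu₀ (ne_top_of_le_ne_top hfu_top hfu₀) (hfu₀.trans hfu)
  rw [dist_eq_norm] at hdist
  have hι : dist (ι v) (ι (T ρ u)) ≤ K * ρ := by
    rw [dist_eq_norm, ← map_sub]
    exact (hιK _).trans (mul_le_mul_of_nonneg_left hdist hK.le)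
  have hsy : dist (ι (sy (T ρ u))) (ι (sy v)) ≤ dist (ι (T ρ u)) (ι v) :=
    dist_apply_le_of_tendsto_foldl hpolS (by simpa only [dist_eq_norm] using hpolContr) hHs
      (hS'S hu₀) (hS'S hv)
  have hTsy' : dist (ι (T ρ u)) (ι (sy (T ρ u))) < ρ := by
    rw [hTsy ρ hρ u (hS'S hu), dist_eq_norm]
    exact hTapprox ρ hρ u (hS'S hu)
  refine ⟨v, hv, ?_, fun w hw => by simpa only [dist_eq_norm] using hmin w hw, hfv.trans hfu₀, ?_⟩
  · calc ‖ι v - ι (sy v)‖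
        ≤ dist (ι v) (ι (T ρ u)) + dist (ι (T ρ u)) (ι (sy (T ρ u)))
          + dist (ι (sy (T ρ u))) (ι (sy v)) := dist_eq_norm (ι v) _ ▸ dist_triangle4 _ _ _ _
      _ < (2 * K + 1) * ρ := by linarith [dist_comm (ι v) (ι (T ρ u))]
  · linarith [norm_sub_le_norm_sub_add_norm_sub v (T ρ u) u]

theorem symmetric_ekeland_I
    {X : Type*} [NormedAddCommGroup X] [NormedSpace ℝ X] [CompleteSpace X]
    {V : Type*} [NormedAddCommGroup V] [NormedSpace ℝ V] [CompleteSpace V]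
    {W : Type*} [NormedAddCommGroup W] [NormedSpace ℝ W] [CompleteSpace W]
    (ι : X →L[ℝ] V) (κ : V →L[ℝ] W)
    (K : ℝ) (hK : 0 < K) (hιK : ∀ u : X, ‖ι u‖ ≤ K * ‖u‖)
    (S : Set X)
    {P : Type*} [TopologicalSpace P] [PathConnectedSpace P]
    (pol : X → P → X) (sy : X → X)
    (hpolS : ∀ u ∈ S, ∀ H : P, pol u H ∈ S)
    (hsyS : ∀ u : X, sy u ∈ S)
    (hpolCont : ContinuousOn (fun q : X × P => pol q.1 q.2) (S ×ˢ Set.univ))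
    (hsypol : ∀ u ∈ S, ∀ H : P,
      pol (sy u) H = sy u ∧ sy (pol u H) = sy u ∧ pol (pol u H) H = pol u H)
    (happrox : ∃ Hs : ℕ → P, ∀ u ∈ S,
      Filter.Tendsto (fun m => ι (List.foldl pol u ((List.range m).map Hs)))
        Filter.atTop (nhds (ι (sy u))))
    (hpolContr : ∀ u ∈ S, ∀ v ∈ S, ∀ H : P, ‖ι (pol u H) - ι (pol v H)‖ ≤ ‖ι u - ι v‖)
    (Θ : X → X) (CΘ : ℝ) (hCΘ : 0 < CΘ)
    (hΘS : ∀ u : X, Θ u ∈ S) (hΘid : ∀ u ∈ S, Θ u = u)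
    (hΘlip : ∀ u v : X, ‖ι (Θ u) - ι (Θ v)‖ ≤ CΘ * ‖ι u - ι v‖)
    (hpolext : ∀ u : X, ∀ H : P, pol u H = pol (Θ u) H)
    (hsyext : ∀ u : X, sy u = sy (Θ u))
    (T : ℝ → X → X)
    (hTS : ∀ ρ > (0:ℝ), ∀ u ∈ S, T ρ u ∈ S)
    (hTpol : ∀ ρ > (0:ℝ), ∀ u ∈ S, ∃ l : List P, T ρ u = List.foldl pol u l)
    (hTsy : ∀ ρ > (0:ℝ), ∀ u ∈ S, sy (T ρ u) = sy u)
    (hTapprox : ∀ ρ > (0:ℝ), ∀ u ∈ S, ‖ι (T ρ u) - ι (sy u)‖ < ρ)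
    (S' : Set X) (hS'S : S' ⊆ S) (hS'closed : IsClosed S')
    (hS'pol : ∀ u ∈ S', ∀ H : P, pol u H ∈ S')
    (hS'sy : ∀ u ∈ S', sy u ∈ S')
    (hTS' : ∀ ρ > (0:ℝ), ∀ u ∈ S', T ρ u ∈ S')
    (f : X → EReal)
    (hfproper : ∃ u ∈ S', f u ≠ ⊤)
    (hfbdd : ∃ c : ℝ, ∀ u ∈ S', (c : EReal) ≤ f u)
    (hflsc : LowerSemicontinuousOn f S')
    (hfpol : ∀ u ∈ S', ∀ H : P, f (pol u H) ≤ f u)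
    (ρ σ : ℝ) (hρ : 0 < ρ) (hσ : 0 < σ)
    (u : X) (hu : u ∈ S')
    (hfu : f u ≤ (⨅ w : S', f w) + ((σ * ρ : ℝ) : EReal)) :
    ∃ v ∈ S',
      ‖ι v - ι (sy v)‖ < (2 * K + 1) * ρ ∧
      (∀ w ∈ S', f v - ((σ * ‖w - v‖ : ℝ) : EReal) ≤ f w) ∧
      f v ≤ f u ∧
      ‖v - u‖ ≤ ρ + ‖T ρ u - u‖ :=
  symmetric_ekeland_I_general ι K hK hιK S pol sy hpolS happrox hpolContr T hTpol hTsy hTapprox S'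
    hS'S hS'closed hS'pol hTS' f hfproper hfbdd hflsc hfpol ρ σ hρ hσ u hu hfu
end

section
/- Symmetric Ekeland principle II. In the abstract symmetrization framework, let X be a Banach space and f : X → ℝ ∪ {+∞} a proper, bounded below, lower semicontinuous functional such that f(u^H) ≤ f(u) for all u ∈ S and all H ∈ ℋ*, and such that for every u in the effective domain of f there exists ξ ∈ S with f(ξ) ≤ f(u). Then for every ρ > 0 and σ > 0 and every u ∈ S with f(u) ≤ inf_X f + σρ, there exists v ∈ X such that: (a) ‖v − v*‖_V < (K(C_Θ+1)+1)ρ; (b) f(w) ≥ f(v) − σ‖w − v‖ for all w ∈ X; (c) f(v) ≤ f(u); (d) ‖v − u‖ ≤ ρ + ‖T_ρ u − u‖. -/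
/-! Apply Ekeland's variational principle not at `u` but at `T ρ u`: this point is no worse
for `f` (it is obtained from `u` by polarizations) and lies within `ρ` of its own
symmetrization `u*`. The Ekeland point `v` lies within `ρ` of `T ρ u`, and symmetrization is
`C_Θ`-Lipschitz in `V` (on `S` it is a limit of non-expansive iterated polarizations, and it
factors through `Θ`), so `v` is within `(K (C_Θ + 1) + 1) ρ` of `v*`. -/

open Filter Topology Set

section Ekeland

variable {Y : Type*} [MetricSpace Y] {g : Y → ℝ} {ε : ℝ}

def ekelandSet (g : Y → ℝ) (ε : ℝ) (x : Y) : Set Y :=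
  {w | g w + ε * dist w x ≤ g x}

lemma mem_ekelandSet_self (x : Y) : x ∈ ekelandSet g ε x := by
  simp [ekelandSet]

lemma ekelandSet_subset (hε : 0 ≤ ε) {x w : Y} (hw : w ∈ ekelandSet g ε x) :
    ekelandSet g ε w ⊆ ekelandSet g ε x := by
  intro z hz
  simp only [ekelandSet, mem_ofPred_eq] at hw hz ⊢
  nlinarith [dist_triangle z w x]

lemma LowerSemicontinuous.isClosed_ekelandSet (hg : LowerSemicontinuous g) (x : Y) :
    IsClosed (ekelandSet g ε x) :=
  (hg.add (continuous_const.mul (continuous_id.dist continuous_const)).lowerSemicontinuous)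
    |>.isClosed_preimage (g x)

lemma exists_mem_ekelandSet_forall_le_add (hbdd : BddBelow (range g)) (x : Y) {δ : ℝ}
    (hδ : 0 < δ) : ∃ w ∈ ekelandSet g ε x, ∀ z ∈ ekelandSet g ε x, g w ≤ g z + δ := by
  have hne : (g '' ekelandSet g ε x).Nonempty := ⟨g x, x, mem_ekelandSet_self x, rfl⟩
  obtain ⟨_, ⟨w, hw, rfl⟩, hlt⟩ := exists_lt_of_csInf_lt hne (lt_add_of_pos_right _ hδ)
  refine ⟨w, hw, fun z hz => hlt.le.trans ?_⟩
  gcongr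
  exact csInf_le (hbdd.mono (image_subset_range _ _)) ⟨z, hz, rfl⟩

/-- Each step picks a near-minimiser of `g` on the current Ekeland set, which forces the next
Ekeland set to be small. -/
lemma exists_antitone_ekelandSet (hbdd : BddBelow (range g)) (hε : 0 < ε) (x₀ : Y) :
    ∃ y : ℕ → Y, ekelandSet g ε (y 0) ⊆ ekelandSet g ε x₀ ∧
      Antitone (fun n => ekelandSet g ε (y n)) ∧
      ∀ n, ∀ w ∈ ekelandSet g ε (y n), dist w (y n) ≤ 1 / (n + 1) := by
  choose next hnext_mem hnext_le using fun (x : Y) (n : ℕ) =>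
    exists_mem_ekelandSet_forall_le_add (ε := ε) hbdd x (δ := ε / (n + 1)) (by positivity)
  let x : ℕ → Y := fun n => Nat.rec x₀ (fun n xn => next xn n) n
  have hsucc (n : ℕ) : ekelandSet g ε (x (n + 1)) ⊆ ekelandSet g ε (x n) :=
    ekelandSet_subset hε.le (hnext_mem (x n) n)
  refine ⟨fun n => x (n + 1), hsucc 0, antitone_nat_of_succ_le fun n => hsucc (n + 1),
    fun n w hw => ?_⟩
  have h₁ : g (x (n + 1)) ≤ g w + ε / (n + 1) := hnext_le (x n) n w (hsucc n hw)
  have h₂ : g w + ε * dist w (x (n + 1)) ≤ g (x (n + 1)) := hw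
  rw [← mul_le_mul_iff_right₀ hε]
  calc ε * dist w (x (n + 1)) ≤ ε / (n + 1) := by linarith
    _ = ε * (1 / (n + 1)) := by ring

theorem LowerSemicontinuous.exists_ekeland [CompleteSpace Y] (hg : LowerSemicontinuous g)
    (hbdd : BddBelow (range g)) (hε : 0 < ε) (x₀ : Y) :
    ∃ v, g v + ε * dist v x₀ ≤ g x₀ ∧ ∀ w ≠ v, g v < g w + ε * dist w v := by
  obtain ⟨y, hy₀, hanti, hsmall⟩ := exists_antitone_ekelandSet hbdd hε x₀
  have hcauchy : CauchySeq y := cauchySeq_of_le_tendsto_0' (fun n : ℕ => 1 / ((n : ℝ) + 1))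
    (fun m n hmn => dist_comm (y m) (y n) ▸ hsmall m (y n) (hanti hmn (mem_ekelandSet_self _)))
    tendsto_one_div_add_atTop_nhds_zero_nat
  obtain ⟨v, hv⟩ := cauchySeq_tendsto_of_complete hcauchy
  have hvmem (n : ℕ) : v ∈ ekelandSet g ε (y n) :=
    (hg.isClosed_ekelandSet (y n)).mem_of_tendsto hv <|
      (eventually_ge_atTop n).mono fun m hm => hanti hm (mem_ekelandSet_self _)
  refine ⟨v, hy₀ (hvmem 0), fun w hwv => lt_of_not_ge fun hw => hwv ?_⟩
  -- `w` lies in every Ekeland set `ekelandSet g ε (y n)`, whose diameters tend to zero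
  have hwmem (n : ℕ) : w ∈ ekelandSet g ε (y n) := ekelandSet_subset hε.le (hvmem n) hw
  have hyw : Tendsto y atTop (𝓝 w) :=
    tendsto_iff_dist_tendsto_zero.2 <| squeeze_zero (fun _ => dist_nonneg)
      (fun n => dist_comm (y n) w ▸ hsmall n w (hwmem n)) tendsto_one_div_add_atTop_nhds_zero_nat
  exact tendsto_nhds_unique hyw hv

lemma LowerSemicontinuous.toReal {f : Y → EReal} (hf : LowerSemicontinuous f)
    (hbot : ∀ y, f y ≠ ⊥) (htop : ∀ y, f y ≠ ⊤) :
    LowerSemicontinuous fun y => (f y).toReal := by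
  intro y a (ha : a < (f y).toReal)
  show ∀ᶠ z in 𝓝 y, a < (f z).toReal
  rw [← EReal.coe_lt_coe_iff, EReal.coe_toReal (htop y) (hbot y)] at ha
  filter_upwards [hf y a ha] with z hz
  rwa [← EReal.coe_lt_coe_iff, EReal.coe_toReal (htop z) (hbot z)]

theorem LowerSemicontinuous.exists_ekeland_ereal [CompleteSpace Y] {f : Y → EReal}
    (hf : LowerSemicontinuous f) {c : ℝ} (hc : ∀ y, (c : EReal) ≤ f y) (hε : 0 < ε)
    {x₀ : Y} (hx₀ : f x₀ ≠ ⊤) :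
    ∃ v, f v + (ε * dist v x₀ : ℝ) ≤ f x₀ ∧ ∀ w, f v ≤ f w + (ε * dist w v : ℝ) := by
  -- Ekeland's principle for the real-valued truncation `min f (f x₀)`
  set F : Y → EReal := fun y => min (f y) (f x₀)
  have hFc (y : Y) : (c : EReal) ≤ F y := le_min (hc y) (hc x₀)
  have hFbot (y : Y) : F y ≠ ⊥ := ne_bot_of_le_ne_bot (EReal.coe_ne_bot c) (hFc y)
  have hFtop (y : Y) : F y ≠ ⊤ := ne_top_of_le_ne_top hx₀ (min_le_right _ _)
  have hcoe (y : Y) : ((F y).toReal : EReal) = F y := EReal.coe_toReal (hFtop y) (hFbot y)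
  have hG : LowerSemicontinuous fun y => (F y).toReal :=
    (hf.inf lowerSemicontinuous_const).toReal hFbot hFtop
  obtain ⟨v, hv₀, hv⟩ := hG.exists_ekeland
    ⟨c, forall_mem_range.2 fun y => EReal.coe_le_coe_iff.1 ((hFc y).trans_eq (hcoe y).symm)⟩
    hε x₀
  -- the truncation does not bite at `v`: otherwise `F v = F x₀` forces `v = x₀`
  have hvx₀ : f v ≤ f x₀ := by
    by_contra! hlt
    have hFeq : F v = F x₀ := by simp only [F, min_eq_right hlt.le, min_self]
    rw [hFeq, add_le_iff_nonpos_right, mul_nonpos_iff_pos_imp_nonpos] at hv₀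
    exact hlt.ne (by rw [dist_le_zero.1 (hv₀.1 hε)])
  have hFv : F v = f v := min_eq_left hvx₀
  refine ⟨v, ?_, fun w => ?_⟩
  · calc f v + (ε * dist v x₀ : ℝ) = ((F v).toReal + ε * dist v x₀ : ℝ) := by
          rw [EReal.coe_add, hcoe, hFv]
      _ ≤ (F x₀).toReal := EReal.coe_le_coe_iff.2 hv₀
      _ = f x₀ := (hcoe x₀).trans (min_self _)
  · rcases eq_or_ne w v with rfl | hwv
    · simp
    calc f v = (F v).toReal := ((hcoe v).trans hFv).symm
      _ ≤ ((F w).toReal + ε * dist w v : ℝ) := EReal.coe_le_coe_iff.2 (hv w hwv).le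
      _ = F w + (ε * dist w v : ℝ) := by rw [EReal.coe_add, hcoe]
      _ ≤ f w + (ε * dist w v : ℝ) := by gcongr; exact min_le_left _ _

theorem LowerSemicontinuous.exists_ekeland_of_le_iInf_add [CompleteSpace Y] {f : Y → EReal}
    (hf : LowerSemicontinuous f) {c : ℝ} (hc : ∀ y, (c : EReal) ≤ f y) (hε : 0 < ε)
    {ρ : ℝ} (hρ : 0 ≤ ρ) {x₀ : Y} (hx₀ : f x₀ ≤ (⨅ y, f y) + (ε * ρ : ℝ)) :
    ∃ v, f v ≤ f x₀ ∧ dist v x₀ ≤ ρ ∧ ∀ w, f v ≤ f w + (ε * dist w v : ℝ) := by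
  by_cases htop : f x₀ = ⊤
  · have hinf : ⨅ y, f y = ⊤ := by
      by_contra hne
      exact (EReal.add_lt_top hne (EReal.coe_ne_top _)).not_ge (htop ▸ hx₀)
    have hall : ∀ y, f y = ⊤ := iInf_eq_top.1 hinf
    exact ⟨x₀, le_rfl, by rwa [dist_self], fun w => by rw [hall x₀, hall w, EReal.top_add_coe]⟩
  obtain ⟨v, hv₀, hv⟩ := hf.exists_ekeland_ereal hc hε htop
  have hvtop : f v ≠ ⊤ := fun h => htop (top_le_iff.1 (h ▸ hv₀ :))
  have hvx₀ : f x₀ ≤ f v + (ε * ρ : ℝ) := hx₀.trans (by gcongr; exact iInf_le f v)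
  refine ⟨v, (le_add_of_nonneg_right (EReal.coe_nonneg.2 (by positivity))).trans hv₀, ?_, hv⟩
  lift f v to ℝ using ⟨hvtop, ne_bot_of_le_ne_bot (EReal.coe_ne_bot c) (hc v)⟩ with a
  lift f x₀ to ℝ using ⟨htop, ne_bot_of_le_ne_bot (EReal.coe_ne_bot c) (hc x₀)⟩ with b
  norm_cast at hv₀ hvx₀
  exact le_of_mul_le_mul_left (by linarith) hε

end Ekeland

section Polarization

variable {X P : Type*} {S : Set X} {pol : X → P → X}

lemma foldl_pol_le {α : Type*} [Preorder α] {f : X → α} (hpolS : ∀ u ∈ S, ∀ H, pol u H ∈ S)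
    (hfpol : ∀ u ∈ S, ∀ H, f (pol u H) ≤ f u) (l : List P) {u : X} (hu : u ∈ S) :
    f (l.foldl pol u) ≤ f u := by
  induction l generalizing u with
  | nil => exact le_rfl
  | cons H l ih => exact (ih (hpolS u hu H)).trans (hfpol u hu H)

variable {V : Type*} [SeminormedAddCommGroup V] {e : X → V}

lemma norm_foldl_pol_sub_le (hpolS : ∀ u ∈ S, ∀ H, pol u H ∈ S)
    (hcontr : ∀ u ∈ S, ∀ v ∈ S, ∀ H, ‖e (pol u H) - e (pol v H)‖ ≤ ‖e u - e v‖)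
    (l : List P) {u v : X} (hu : u ∈ S) (hv : v ∈ S) :
    ‖e (l.foldl pol u) - e (l.foldl pol v)‖ ≤ ‖e u - e v‖ := by
  induction l generalizing u v with
  | nil => exact le_rfl
  | cons H l ih => exact (ih (hpolS u hu H) (hpolS v hv H)).trans (hcontr u hu v hv H)

lemma norm_sy_sub_le (hpolS : ∀ u ∈ S, ∀ H, pol u H ∈ S)
    (hcontr : ∀ u ∈ S, ∀ v ∈ S, ∀ H, ‖e (pol u H) - e (pol v H)‖ ≤ ‖e u - e v‖)
    {sy : X → X} (happrox : ∃ Hs : ℕ → P, ∀ u ∈ S,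
      Tendsto (fun m => e (List.foldl pol u ((List.range m).map Hs))) atTop (𝓝 (e (sy u))))
    {u v : X} (hu : u ∈ S) (hv : v ∈ S) :
    ‖e (sy u) - e (sy v)‖ ≤ ‖e u - e v‖ := by
  obtain ⟨Hs, hHs⟩ := happrox
  exact le_of_tendsto' ((hHs u hu).sub (hHs v hv)).norm
    fun m => norm_foldl_pol_sub_le hpolS hcontr _ hu hv

lemma norm_sy_sub_le_mul (hpolS : ∀ u ∈ S, ∀ H, pol u H ∈ S)
    (hcontr : ∀ u ∈ S, ∀ v ∈ S, ∀ H, ‖e (pol u H) - e (pol v H)‖ ≤ ‖e u - e v‖)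
    {sy : X → X} (happrox : ∃ Hs : ℕ → P, ∀ u ∈ S,
      Tendsto (fun m => e (List.foldl pol u ((List.range m).map Hs))) atTop (𝓝 (e (sy u))))
    {Θ : X → X} {C : ℝ} (hΘS : ∀ u, Θ u ∈ S)
    (hΘlip : ∀ u v, ‖e (Θ u) - e (Θ v)‖ ≤ C * ‖e u - e v‖) (hsyext : ∀ u, sy u = sy (Θ u))
    (u v : X) : ‖e (sy u) - e (sy v)‖ ≤ C * ‖e u - e v‖ := by
  rw [hsyext u, hsyext v]
  exact (norm_sy_sub_le hpolS hcontr happrox (hΘS u) (hΘS v)).trans (hΘlip u v)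

end Polarization

lemma norm_sub_sy_lt {X V F : Type*} [SeminormedAddCommGroup X] [SeminormedAddCommGroup V]
    [FunLike F X V] [AddMonoidHomClass F X V] {ι : F} {K C ρ : ℝ} {sy : X → X}
    (hιK : ∀ u, ‖ι u‖ ≤ K * ‖u‖) (hK : 0 ≤ K)
    (hsy : ∀ u v, ‖ι (sy u) - ι (sy v)‖ ≤ C * ‖ι u - ι v‖) (hC : 0 ≤ C) {x v : X}
    (hx : ‖ι x - ι (sy x)‖ < ρ) (hv : ‖v - x‖ ≤ ρ) :
    ‖ι v - ι (sy v)‖ < (K * (C + 1) + 1) * ρ := by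
  have hvx : ‖ι v - ι x‖ ≤ K * ρ := by
    rw [← map_sub]
    exact (hιK _).trans (by gcongr)
  have hsyvx : ‖ι (sy x) - ι (sy v)‖ ≤ C * (K * ρ) :=
    (hsy x v).trans (by rw [norm_sub_rev]; gcongr)
  calc ‖ι v - ι (sy v)‖ ≤ ‖ι v - ι x‖ + ‖ι x - ι (sy x)‖ + ‖ι (sy x) - ι (sy v)‖ := by
        linarith [norm_sub_le_norm_sub_add_norm_sub (ι v) (ι x) (ι (sy v)),
          norm_sub_le_norm_sub_add_norm_sub (ι x) (ι (sy x)) (ι (sy v))]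
    _ < K * ρ + ρ + C * (K * ρ) := by linarith
    _ = (K * (C + 1) + 1) * ρ := by ring

theorem symmetric_ekeland_II_general
    {X : Type*} [NormedAddCommGroup X] [NormedSpace ℝ X] [CompleteSpace X]
    {V : Type*} [NormedAddCommGroup V] [NormedSpace ℝ V]
    (ι : X →L[ℝ] V)
    (K : ℝ) (hK : 0 < K) (hιK : ∀ u : X, ‖ι u‖ ≤ K * ‖u‖)
    (S : Set X)
    {P : Type*}
    (pol : X → P → X) (sy : X → X)
    (hpolS : ∀ u ∈ S, ∀ H : P, pol u H ∈ S)
    (happrox : ∃ Hs : ℕ → P, ∀ u ∈ S,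
      Filter.Tendsto (fun m => ι (List.foldl pol u ((List.range m).map Hs)))
        Filter.atTop (nhds (ι (sy u))))
    (hpolContr : ∀ u ∈ S, ∀ v ∈ S, ∀ H : P, ‖ι (pol u H) - ι (pol v H)‖ ≤ ‖ι u - ι v‖)
    (Θ : X → X) (CΘ : ℝ) (hCΘ : 0 < CΘ)
    (hΘS : ∀ u : X, Θ u ∈ S)
    (hΘlip : ∀ u v : X, ‖ι (Θ u) - ι (Θ v)‖ ≤ CΘ * ‖ι u - ι v‖)
    (hsyext : ∀ u : X, sy u = sy (Θ u))
    (T : ℝ → X → X)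
    (hTpol : ∀ ρ > (0:ℝ), ∀ u ∈ S, ∃ l : List P, T ρ u = List.foldl pol u l)
    (hTsy : ∀ ρ > (0:ℝ), ∀ u ∈ S, sy (T ρ u) = sy u)
    (hTapprox : ∀ ρ > (0:ℝ), ∀ u ∈ S, ‖ι (T ρ u) - ι (sy u)‖ < ρ)
    (f : X → EReal)
    (hfbdd : ∃ c : ℝ, ∀ u, (c : EReal) ≤ f u)
    (hflsc : LowerSemicontinuous f)
    (hfpol : ∀ u ∈ S, ∀ H : P, f (pol u H) ≤ f u)
    (ρ σ : ℝ) (hρ : 0 < ρ) (hσ : 0 < σ)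
    (u : X) (hu : u ∈ S)
    (hfu : f u ≤ (⨅ w, f w) + ((σ * ρ : ℝ) : EReal)) :
    ∃ v : X,
      ‖ι v - ι (sy v)‖ < (K * (CΘ + 1) + 1) * ρ ∧
      (∀ w : X, f v - ((σ * ‖w - v‖ : ℝ) : EReal) ≤ f w) ∧
      f v ≤ f u ∧
      ‖v - u‖ ≤ ρ + ‖T ρ u - u‖ := by
  have hfT : f (T ρ u) ≤ f u := by
    obtain ⟨l, hl⟩ := hTpol ρ hρ u hu
    exact hl ▸ foldl_pol_le hpolS hfpol l hu
  obtain ⟨c, hc⟩ := hfbdd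
  obtain ⟨v, hfv, hdist, hmin⟩ := hflsc.exists_ekeland_of_le_iInf_add hc hσ hρ.le (hfT.trans hfu)
  rw [dist_eq_norm] at hdist
  have hsyLip := norm_sy_sub_le_mul hpolS hpolContr happrox hΘS hΘlip hsyext
  have hTsym : ‖ι (T ρ u) - ι (sy (T ρ u))‖ < ρ := hTsy ρ hρ u hu ▸ hTapprox ρ hρ u hu
  refine ⟨v, norm_sub_sy_lt hιK hK.le hsyLip hCΘ.le hTsym hdist,
    fun w => EReal.sub_le_of_le_add (dist_eq_norm w v ▸ hmin w), hfv.trans hfT, ?_⟩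
  calc ‖v - u‖ ≤ ‖v - T ρ u‖ + ‖T ρ u - u‖ := norm_sub_le_norm_sub_add_norm_sub _ _ _
    _ ≤ ρ + ‖T ρ u - u‖ := by gcongr

theorem symmetric_ekeland_II
    {X : Type*} [NormedAddCommGroup X] [NormedSpace ℝ X] [CompleteSpace X]
    {V : Type*} [NormedAddCommGroup V] [NormedSpace ℝ V] [CompleteSpace V]
    {W : Type*} [NormedAddCommGroup W] [NormedSpace ℝ W] [CompleteSpace W]
    (ι : X →L[ℝ] V) (κ : V →L[ℝ] W)
    (K : ℝ) (hK : 0 < K) (hιK : ∀ u : X, ‖ι u‖ ≤ K * ‖u‖)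
    (S : Set X)
    {P : Type*} [TopologicalSpace P] [PathConnectedSpace P]
    (pol : X → P → X) (sy : X → X)
    (hpolS : ∀ u ∈ S, ∀ H : P, pol u H ∈ S)
    (hsyS : ∀ u : X, sy u ∈ S)
    (hpolCont : ContinuousOn (fun q : X × P => pol q.1 q.2) (S ×ˢ Set.univ))
    (hsypol : ∀ u ∈ S, ∀ H : P,
      pol (sy u) H = sy u ∧ sy (pol u H) = sy u ∧ pol (pol u H) H = pol u H)
    (happrox : ∃ Hs : ℕ → P, ∀ u ∈ S,
      Filter.Tendsto (fun m => ι (List.foldl pol u ((List.range m).map Hs)))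
        Filter.atTop (nhds (ι (sy u))))
    (hpolContr : ∀ u ∈ S, ∀ v ∈ S, ∀ H : P, ‖ι (pol u H) - ι (pol v H)‖ ≤ ‖ι u - ι v‖)
    (Θ : X → X) (CΘ : ℝ) (hCΘ : 0 < CΘ)
    (hΘS : ∀ u : X, Θ u ∈ S) (hΘid : ∀ u ∈ S, Θ u = u)
    (hΘlip : ∀ u v : X, ‖ι (Θ u) - ι (Θ v)‖ ≤ CΘ * ‖ι u - ι v‖)
    (hpolext : ∀ u : X, ∀ H : P, pol u H = pol (Θ u) H)
    (hsyext : ∀ u : X, sy u = sy (Θ u))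
    (T : ℝ → X → X)
    (hTS : ∀ ρ > (0:ℝ), ∀ u ∈ S, T ρ u ∈ S)
    (hTpol : ∀ ρ > (0:ℝ), ∀ u ∈ S, ∃ l : List P, T ρ u = List.foldl pol u l)
    (hTsy : ∀ ρ > (0:ℝ), ∀ u ∈ S, sy (T ρ u) = sy u)
    (hTapprox : ∀ ρ > (0:ℝ), ∀ u ∈ S, ‖ι (T ρ u) - ι (sy u)‖ < ρ)
    (f : X → EReal)
    (hfproper : ∃ u, f u ≠ ⊤)
    (hfbdd : ∃ c : ℝ, ∀ u, (c : EReal) ≤ f u)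
    (hflsc : LowerSemicontinuous f)
    (hfpol : ∀ u ∈ S, ∀ H : P, f (pol u H) ≤ f u)
    (hfdom : ∀ u : X, f u ≠ ⊤ → ∃ ξ ∈ S, f ξ ≤ f u)
    (ρ σ : ℝ) (hρ : 0 < ρ) (hσ : 0 < σ)
    (u : X) (hu : u ∈ S)
    (hfu : f u ≤ (⨅ w, f w) + ((σ * ρ : ℝ) : EReal)) :
    ∃ v : X,
      ‖ι v - ι (sy v)‖ < (K * (CΘ + 1) + 1) * ρ ∧
      (∀ w : X, f v - ((σ * ‖w - v‖ : ℝ) : EReal) ≤ f w) ∧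
      f v ≤ f u ∧
      ‖v - u‖ ≤ ρ + ‖T ρ u - u‖ :=
  symmetric_ekeland_II_general ι K hK hιK S pol sy hpolS happrox hpolContr Θ CΘ hCΘ hΘS hΘlip hsyext
    T hTpol hTsy hTapprox f hfbdd hflsc hfpol ρ σ hρ hσ u hu hfu
end

section
/- Symmetric altered Ekeland principle (V). In the abstract symmetrization framework, let X be a Banach space and f : X → ℝ ∪ {+∞} a proper, bounded below, lower semicontinuous functional such that f(u^H) ≤ f(u) for all u ∈ S and all H ∈ ℋ*. Then for every u ∈ S, ρ > 0 and σ > 0 there exists v ∈ X such that: (a) f(w) > f(v) − σ‖w − v‖ for all w ∈ X with w ≠ v; (b) f(v) ≤ f(u) − σ‖v − T_ρ u‖. If in addition u ∈ X_{ℋ*}, then (b) strengthens to f(v) ≤ f(u) − σ‖v − u‖. -/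
open Filter Topology Metric Set

theorem ekeland_real' {X : Type*} [MetricSpace X] [CompleteSpace X]
    (f : X → ℝ) (hlsc : LowerSemicontinuous f) (c : ℝ) (hbdd : ∀ x, c ≤ f x)
    (ε : ℝ) (hε : 0 < ε) (x₀ : X) :
    ∃ v, f v + ε * dist v x₀ ≤ f x₀ ∧ ∀ w, w ≠ v → f v < f w + ε * dist w v := by
  set F : X → Set X := fun x => {y | f y + ε * dist y x ≤ f x} with hF
  have hmem : ∀ x, x ∈ F x := fun x => by simp [hF]
  have htrans : ∀ x y z, y ∈ F x → z ∈ F y → z ∈ F x := by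
    intro x y z hy hz
    simp only [hF, Set.mem_setOf_eq] at *
    nlinarith [dist_triangle z y x]
  have hne : ∀ x, (f '' F x).Nonempty := fun x => ⟨f x, x, hmem x, rfl⟩
  have hbddF : ∀ x, BddBelow (f '' F x) := fun x =>
    ⟨c, by rintro _ ⟨y, _, rfl⟩; exact hbdd y⟩
  have hnext : ∀ n : ℕ, ∀ x : X, ∃ y, y ∈ F x ∧ f y ≤ sInf (f '' F x) + (1/2)^n := by
    intro n x
    obtain ⟨a, ⟨y, hy, rfl⟩, hlt⟩ :=
      Real.lt_sInf_add_pos (hne x) (by positivity : (0:ℝ) < (1/2)^n)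
    exact ⟨y, hy, hlt.le⟩
  choose next hnextF hnextInf using hnext
  set seq : ℕ → X := fun n => Nat.rec x₀ (fun n x => next n x) n with hseq
  have hseqS : ∀ n, seq (n+1) = next n (seq n) := fun n => rfl
  have hstep : ∀ n, seq (n+1) ∈ F (seq n) := fun n => hnextF n (seq n)
  have hchain : ∀ n m, n ≤ m → seq m ∈ F (seq n) := by
    intro n m hnm
    induction m, hnm using Nat.le_induction with
    | base => exact hmem _
    | succ m hnm ih => exact htrans _ _ _ ih (hstep m)
  have hmono : ∀ n m, n ≤ m → f (seq m) + ε * dist (seq m) (seq n) ≤ f (seq n) :=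
    fun n m h => hchain n m h
  have hanti : Antitone (fun n => f (seq n)) := by
    intro n m h
    have := hmono n m h
    nlinarith [dist_nonneg (x := seq m) (y := seq n)]
  have hbddr : BddBelow (Set.range fun n => f (seq n)) :=
    ⟨c, by rintro _ ⟨n, rfl⟩; exact hbdd _⟩
  set L := ⨅ n, f (seq n) with hL
  have htend : Filter.Tendsto (fun n => f (seq n)) Filter.atTop (nhds L) :=
    tendsto_atTop_ciInf hanti hbddr
  have hLle : ∀ n, L ≤ f (seq n) := fun n => ciInf_le hbddr n
  have hcauchy : CauchySeq seq := by
    rw [Metric.cauchySeq_iff']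
    intro δ hδ
    have : ∀ᶠ n in Filter.atTop, f (seq n) < L + ε * δ :=
      htend.eventually_lt_const (by nlinarith)
    obtain ⟨N, hN⟩ := this.exists
    refine ⟨N, fun n hn => ?_⟩
    have h1 := hmono N n hn
    have h2 := hLle n
    have : ε * dist (seq n) (seq N) < ε * δ := by nlinarith
    exact lt_of_mul_lt_mul_left this hε.le |>.trans_le le_rfl
  obtain ⟨v, hv⟩ := cauchySeq_tendsto_of_complete hcauchy
  have hfvL : f v ≤ L := by
    by_contra h
    push_neg at h
    set y := (L + f v) / 2 with hy
    have h1 : y < f v := by simp [hy]; linarith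
    have h2 : L < y := by simp [hy]; linarith
    have hev : ∀ᶠ n in Filter.atTop, y ≤ f (seq n) :=
      (hv.eventually (hlsc v y h1)).mono fun n h => h.le
    exact absurd (ge_of_tendsto htend hev) (not_le.mpr h2)
  have hvF : ∀ n, v ∈ F (seq n) := by
    intro n
    have hlim : Filter.Tendsto (fun m => f (seq m) + ε * dist (seq m) (seq n))
        Filter.atTop (nhds (L + ε * dist v (seq n))) :=
      htend.add (tendsto_const_nhds.mul (hv.dist tendsto_const_nhds))
    have hev : ∀ᶠ m in Filter.atTop, f (seq m) + ε * dist (seq m) (seq n) ≤ f (seq n) :=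
      Filter.eventually_atTop.mpr ⟨n, fun m hm => hmono n m hm⟩
    have hLd : L + ε * dist v (seq n) ≤ f (seq n) := le_of_tendsto hlim hev
    have : f v + ε * dist v (seq n) ≤ f (seq n) := by
      have := hfvL; linarith
    exact this
  refine ⟨v, hvF 0, ?_⟩
  intro w hw
  by_contra hcon
  push_neg at hcon
  have hwFv : w ∈ F v := hcon
  have hwF : ∀ n, w ∈ F (seq n) := fun n => htrans _ _ _ (hvF n) hwFv
  have hfvw : f v ≤ f w := by
    have key : ∀ n : ℕ, f v ≤ f w + (1/2)^n := by
      intro n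
      have h1 : sInf (f '' F (seq n)) ≤ f w := csInf_le (hbddF _) ⟨w, hwF n, rfl⟩
      have h2 := hnextInf n (seq n)
      have h3 : f v ≤ f (seq (n+1)) := by
        have := hvF (n+1)
        have hd := dist_nonneg (x := v) (y := seq (n+1))
        simp only [hF, Set.mem_setOf_eq] at this
        nlinarith
      rw [hseqS n] at h3
      linarith
    have hlim2 : Filter.Tendsto (fun n : ℕ => f w + (1/2)^n) Filter.atTop (nhds (f w + 0)) :=
      tendsto_const_nhds.add (tendsto_pow_atTop_nhds_zero_of_lt_one (by norm_num) (by norm_num))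
    rw [add_zero] at hlim2
    exact ge_of_tendsto hlim2 (Filter.Eventually.of_forall key)
  have hd0 : dist w v = 0 := by
    simp only [hF, Set.mem_setOf_eq] at hwFv
    nlinarith [dist_nonneg (x := w) (y := v)]
  exact hw (dist_eq_zero.mp hd0)

theorem ekeland_ereal' {X : Type*} [MetricSpace X] [CompleteSpace X]
    (f : X → EReal) (hlsc : LowerSemicontinuous f) (c : ℝ) (hbdd : ∀ x, (c:EReal) ≤ f x)
    (ε : ℝ) (hε : 0 < ε) (x₀ : X) (hx₀ : f x₀ ≠ ⊤) :
    ∃ v, f v + ((ε * dist v x₀ :ℝ):EReal) ≤ f x₀ ∧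
      ∀ w, w ≠ v → f v - ((ε * dist w v :ℝ):EReal) < f w := by
  have hbot : ∀ x, f x ≠ ⊥ := fun x h => by
    have := hbdd x; rw [h] at this; exact absurd this (by simp)
  set M : ℝ := (f x₀).toReal with hM
  have hMx : f x₀ = (M:EReal) := (EReal.coe_toReal hx₀ (hbot x₀)).symm
  set g : X → ℝ := fun x => (min (f x) (M:EReal)).toReal with hg
  have hgfin : ∀ x, min (f x) (M:EReal) ≠ ⊤ ∧ min (f x) (M:EReal) ≠ ⊥ := by
    intro x
    constructor
    · exact ne_top_of_le_ne_top (EReal.coe_ne_top M) (min_le_right _ _)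
    · refine fun h => hbot x ?_
      rcases min_cases (f x) ((M:EReal)) with ⟨h1, _⟩ | ⟨h1, _⟩
      · rw [h1] at h; exact h
      · rw [h1] at h; exact absurd h (EReal.coe_ne_bot M)
  have hgeq : ∀ x, ((g x : ℝ) : EReal) = min (f x) (M:EReal) := fun x =>
    EReal.coe_toReal (hgfin x).1 (hgfin x).2
  have hglsc : LowerSemicontinuous g := by
    intro x y hy
    have h1 : ((y:ℝ):EReal) < min (f x) (M:EReal) := by
      rw [← hgeq x]; exact_mod_cast hy
    obtain ⟨h2, h3⟩ := lt_min_iff.mp h1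
    filter_upwards [hlsc x y h2] with z hz
    have : ((y:ℝ):EReal) < min (f z) (M:EReal) := lt_min_iff.mpr ⟨hz, h3⟩
    rw [← hgeq z] at this
    exact_mod_cast this
  have hgbdd : ∀ x, min c M ≤ g x := by
    intro x
    have h1 : ((min c M : ℝ):EReal) ≤ min (f x) (M:EReal) := by
      have hcoe : ((min c M : ℝ):EReal) = min ((c:ℝ):EReal) (((M:ℝ)):EReal) := by
        rcases le_total c M with h|h
        · rw [min_eq_left h, min_eq_left (by exact_mod_cast h)]
        · rw [min_eq_right h, min_eq_right (by exact_mod_cast h)]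
      rw [hcoe]
      exact min_le_min (hbdd x) le_rfl
    rw [← hgeq x] at h1
    exact_mod_cast h1
  have hgx₀ : g x₀ = M := by
    have : min (f x₀) ((M:EReal)) = (M:EReal) := by rw [hMx, min_self]
    simp [hg, this]
  obtain ⟨v, hv1, hv2⟩ := ekeland_real' g hglsc (min c M) hgbdd ε hε x₀
  rw [hgx₀] at hv1
  have hfvle : f v ≤ (M:EReal) := by
    by_contra h
    push_neg at h
    have hmin : min (f v) ((M:EReal)) = (M:EReal) := min_eq_right h.le
    have hgv : g v = M := by simp [hg, hmin]
    rw [hgv] at hv1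
    have hd : dist v x₀ = 0 := le_antisymm (by nlinarith) dist_nonneg
    rw [dist_eq_zero.mp hd, hMx] at h
    exact absurd h (lt_irrefl _)
  have hfv : f v = ((g v : ℝ):EReal) := by
    rw [hgeq v, min_eq_left hfvle]
  refine ⟨v, ?_, ?_⟩
  · rw [hfv, hMx, ← EReal.coe_add]
    exact_mod_cast hv1
  · intro w hw
    rcases eq_or_ne (f w) ⊤ with hwt | hwt
    · rw [hwt, hfv, ← EReal.coe_sub]
      exact EReal.coe_lt_top _
    · have hwf : f w = (((f w).toReal : ℝ):EReal) := (EReal.coe_toReal hwt (hbot w)).symm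
      have hgw : g w ≤ (f w).toReal := by
        have h1 : min (f w) ((M:EReal)) ≤ f w := min_le_left _ _
        rw [← hgeq w, hwf] at h1
        exact_mod_cast h1
      have := hv2 w hw
      rw [hfv, hwf, ← EReal.coe_sub]
      exact_mod_cast (by nlinarith : g v - ε * dist w v < (f w).toReal)

theorem symmetric_altered_ekeland_V
    {X : Type*} [NormedAddCommGroup X] [NormedSpace ℝ X] [CompleteSpace X]
    {V : Type*} [NormedAddCommGroup V] [NormedSpace ℝ V] [CompleteSpace V]
    {W : Type*} [NormedAddCommGroup W] [NormedSpace ℝ W] [CompleteSpace W]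
    (ι : X →L[ℝ] V) (κ : V →L[ℝ] W)
    (K : ℝ) (hK : 0 < K) (hιK : ∀ u : X, ‖ι u‖ ≤ K * ‖u‖)
    (S : Set X)
    {P : Type*} [TopologicalSpace P] [PathConnectedSpace P]
    (pol : X → P → X) (sy : X → X)
    (hpolS : ∀ u ∈ S, ∀ H : P, pol u H ∈ S)
    (hsyS : ∀ u : X, sy u ∈ S)
    (hpolCont : ContinuousOn (fun q : X × P => pol q.1 q.2) (S ×ˢ Set.univ))
    (hsypol : ∀ u ∈ S, ∀ H : P,
      pol (sy u) H = sy u ∧ sy (pol u H) = sy u ∧ pol (pol u H) H = pol u H)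
    (happrox : ∃ Hs : ℕ → P, ∀ u ∈ S,
      Filter.Tendsto (fun m => ι (List.foldl pol u ((List.range m).map Hs)))
        Filter.atTop (nhds (ι (sy u))))
    (hpolContr : ∀ u ∈ S, ∀ v ∈ S, ∀ H : P, ‖ι (pol u H) - ι (pol v H)‖ ≤ ‖ι u - ι v‖)
    (Θ : X → X) (CΘ : ℝ) (hCΘ : 0 < CΘ)
    (hΘS : ∀ u : X, Θ u ∈ S) (hΘid : ∀ u ∈ S, Θ u = u)
    (hΘlip : ∀ u v : X, ‖ι (Θ u) - ι (Θ v)‖ ≤ CΘ * ‖ι u - ι v‖)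
    (hpolext : ∀ u : X, ∀ H : P, pol u H = pol (Θ u) H)
    (hsyext : ∀ u : X, sy u = sy (Θ u))
    (T : ℝ → X → X)
    (hTS : ∀ ρ > (0:ℝ), ∀ u ∈ S, T ρ u ∈ S)
    (hTpol : ∀ ρ > (0:ℝ), ∀ u ∈ S, ∃ l : List P, T ρ u = List.foldl pol u l)
    (hTsy : ∀ ρ > (0:ℝ), ∀ u ∈ S, sy (T ρ u) = sy u)
    (hTapprox : ∀ ρ > (0:ℝ), ∀ u ∈ S, ‖ι (T ρ u) - ι (sy u)‖ < ρ)
    (f : X → EReal)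
    (hfproper : ∃ u, f u ≠ ⊤)
    (hfbdd : ∃ c : ℝ, ∀ u, (c : EReal) ≤ f u)
    (hflsc : LowerSemicontinuous f)
    (hfpol : ∀ u ∈ S, ∀ H : P, f (pol u H) ≤ f u)
    (u : X) (hu : u ∈ S) (ρ σ : ℝ) (hρ : 0 < ρ) (hσ : 0 < σ) :
    ∃ v : X,
      (∀ w : X, w ≠ v → f v - ((σ * ‖w - v‖ : ℝ) : EReal) < f w) ∧
      f v ≤ f u - ((σ * ‖v - T ρ u‖ : ℝ) : EReal) ∧
      ((∀ H : P, pol u H = u) → f v ≤ f u - ((σ * ‖v - u‖ : ℝ) : EReal)) := by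

  classical
  obtain ⟨c, hc⟩ := hfbdd
  have hfoldl : ∀ l : List P, ∀ x, x ∈ S →
      List.foldl pol x l ∈ S ∧ f (List.foldl pol x l) ≤ f x := by
    intro l
    induction l with
    | nil => intro x hx; exact ⟨hx, le_rfl⟩
    | cons H t ih =>
      intro x hx
      obtain ⟨h2, h3⟩ := ih (pol x H) (hpolS x hx H)
      exact ⟨h2, h3.trans (hfpol x hx H)⟩
  have hbot : ∀ x, f x ≠ ⊥ := fun x h => by
    have := hc x; rw [h] at this; exact absurd this (by simp)
  by_cases hfu : f u = ⊤
  · obtain ⟨u₁, hu₁⟩ := hfproper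
    obtain ⟨v, _, hmin⟩ := ekeland_ereal' f hflsc c hc σ hσ u₁ hu₁
    refine ⟨v, fun w hw => ?_, ?_, fun _ => ?_⟩
    · have := hmin w hw; rwa [dist_eq_norm] at this
    · rw [hfu, EReal.top_sub_coe]; exact le_top
    · rw [hfu, EReal.top_sub_coe]; exact le_top
  · obtain ⟨l, hl⟩ := hTpol ρ hρ u hu
    obtain ⟨hu₀S, hfu₀le⟩ := hfoldl l u hu
    rw [← hl] at hu₀S hfu₀le
    have hu₀top : f (T ρ u) ≠ ⊤ := fun h => hfu (top_le_iff.mp (h ▸ hfu₀le))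
    obtain ⟨v, h1, h2⟩ := ekeland_ereal' f hflsc c hc σ hσ (T ρ u) hu₀top
    have hfvle : f v + ((σ * dist v (T ρ u) : ℝ) : EReal) ≤ f u := h1.trans hfu₀le
    have hfvtop : f v ≠ ⊤ := by
      intro h
      rw [h, EReal.top_add_coe] at hfvle
      exact hfu (top_le_iff.mp hfvle)
    obtain ⟨a, ha⟩ : ∃ a : ℝ, f v = (a : EReal) :=
      ⟨_, (EReal.coe_toReal hfvtop (hbot v)).symm⟩
    obtain ⟨b, hb⟩ : ∃ b : ℝ, f u = (b : EReal) :=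
      ⟨_, (EReal.coe_toReal hfu (hbot u)).symm⟩
    have hB : f v ≤ f u - ((σ * ‖v - T ρ u‖ : ℝ) : EReal) := by
      rw [ha, hb, ← EReal.coe_add] at hfvle
      rw [ha, hb, ← EReal.coe_sub, EReal.coe_le_coe_iff]
      rw [EReal.coe_le_coe_iff] at hfvle
      rw [dist_eq_norm] at hfvle
      linarith
    refine ⟨v, fun w hw => ?_, hB, fun hfix => ?_⟩
    · have := h2 w hw; rwa [dist_eq_norm] at this
    · have hfold_fix : ∀ l' : List P, List.foldl pol u l' = u := by
        intro l'
        induction l' with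
        | nil => rfl
        | cons H t ih => rw [List.foldl_cons, hfix H, ih]
      rwa [hl, hfold_fix l] at hB
end

section
/- Localization in the symmetric altered Ekeland principle. In the abstract symmetrization framework, let X be a Banach space and f : X → ℝ ∪ {+∞} a proper, bounded below, lower semicontinuous functional such that f(u^H) ≤ f(u) for all u ∈ S and all H ∈ ℋ*. Let u ∈ S, ρ > 0, σ > 0 be such that f(u) ≤ inf_X f + ρσ, and let v ∈ X satisfy f(v) ≤ f(u) − σ‖v − T_ρ u‖ (as provided by the symmetric altered Ekeland principle). Then ‖v − T_ρ u‖ ≤ ρ, ‖v − u‖ ≤ ρ + ‖T_ρ u − u‖, and ‖v − v*‖_V < (K(C_Θ+1)+1)ρ. -/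
open Filter Topology Metric Set

theorem symmetric_altered_ekeland_localization
    {X : Type*} [NormedAddCommGroup X] [NormedSpace ℝ X] [CompleteSpace X]
    {V : Type*} [NormedAddCommGroup V] [NormedSpace ℝ V] [CompleteSpace V]
    {W : Type*} [NormedAddCommGroup W] [NormedSpace ℝ W] [CompleteSpace W]
    (ι : X →L[ℝ] V) (κ : V →L[ℝ] W)
    (K : ℝ) (hK : 0 < K) (hιK : ∀ u : X, ‖ι u‖ ≤ K * ‖u‖)
    (S : Set X)
    {P : Type*} [TopologicalSpace P] [PathConnectedSpace P]
    (pol : X → P → X) (sy : X → X)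
    (hpolS : ∀ u ∈ S, ∀ H : P, pol u H ∈ S)
    (hsyS : ∀ u : X, sy u ∈ S)
    (hpolCont : ContinuousOn (fun q : X × P => pol q.1 q.2) (S ×ˢ Set.univ))
    (hsypol : ∀ u ∈ S, ∀ H : P,
      pol (sy u) H = sy u ∧ sy (pol u H) = sy u ∧ pol (pol u H) H = pol u H)
    (happrox : ∃ Hs : ℕ → P, ∀ u ∈ S,
      Filter.Tendsto (fun m => ι (List.foldl pol u ((List.range m).map Hs)))
        Filter.atTop (nhds (ι (sy u))))
    (hpolContr : ∀ u ∈ S, ∀ v ∈ S, ∀ H : P, ‖ι (pol u H) - ι (pol v H)‖ ≤ ‖ι u - ι v‖)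
    (Θ : X → X) (CΘ : ℝ) (hCΘ : 0 < CΘ)
    (hΘS : ∀ u : X, Θ u ∈ S) (hΘid : ∀ u ∈ S, Θ u = u)
    (hΘlip : ∀ u v : X, ‖ι (Θ u) - ι (Θ v)‖ ≤ CΘ * ‖ι u - ι v‖)
    (hpolext : ∀ u : X, ∀ H : P, pol u H = pol (Θ u) H)
    (hsyext : ∀ u : X, sy u = sy (Θ u))
    (T : ℝ → X → X)
    (hTS : ∀ ρ > (0:ℝ), ∀ u ∈ S, T ρ u ∈ S)
    (hTpol : ∀ ρ > (0:ℝ), ∀ u ∈ S, ∃ l : List P, T ρ u = List.foldl pol u l)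
    (hTsy : ∀ ρ > (0:ℝ), ∀ u ∈ S, sy (T ρ u) = sy u)
    (hTapprox : ∀ ρ > (0:ℝ), ∀ u ∈ S, ‖ι (T ρ u) - ι (sy u)‖ < ρ)
    (f : X → EReal)
    (hfproper : ∃ u, f u ≠ ⊤)
    (hfbdd : ∃ c : ℝ, ∀ u, (c : EReal) ≤ f u)
    (hflsc : LowerSemicontinuous f)
    (hfpol : ∀ u ∈ S, ∀ H : P, f (pol u H) ≤ f u)
    (u : X) (hu : u ∈ S) (ρ σ : ℝ) (hρ : 0 < ρ) (hσ : 0 < σ)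
    (hfu : f u ≤ (⨅ w, f w) + ((ρ * σ : ℝ) : EReal))
    (v : X) (hv : f v ≤ f u - ((σ * ‖v - T ρ u‖ : ℝ) : EReal)) :
    ‖v - T ρ u‖ ≤ ρ ∧
    ‖v - u‖ ≤ ρ + ‖T ρ u - u‖ ∧
    ‖ι v - ι (sy v)‖ < (K * (CΘ + 1) + 1) * ρ := by
  classical
  -- auxiliary: iterated polarizations stay in S and contract
  have fold_contr : ∀ (l : List P) (a b : X), a ∈ S → b ∈ S →
      List.foldl pol a l ∈ S ∧
      ‖ι (List.foldl pol a l) - ι (List.foldl pol b l)‖ ≤ ‖ι a - ι b‖ := by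
    intro l
    induction l with
    | nil => intro a b ha hb; exact ⟨ha, le_rfl⟩
    | cons H l ih =>
      intro a b ha hb
      simp only [List.foldl_cons]
      obtain ⟨hm, hle⟩ := ih (pol a H) (pol b H) (hpolS a ha H) (hpolS b hb H)
      exact ⟨hm, hle.trans (hpolContr a ha b hb H)⟩
  -- symmetrization is a contraction on S in the V norm
  have sy_contr : ∀ a ∈ S, ∀ b ∈ S, ‖ι (sy a) - ι (sy b)‖ ≤ ‖ι a - ι b‖ := by
    obtain ⟨Hs, hHs⟩ := happrox
    intro a ha b hb
    have hta := hHs a ha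
    have htb := hHs b hb
    have htend : Filter.Tendsto
        (fun m => ‖ι (List.foldl pol a ((List.range m).map Hs))
          - ι (List.foldl pol b ((List.range m).map Hs))‖)
        Filter.atTop (nhds ‖ι (sy a) - ι (sy b)‖) := (hta.sub htb).norm
    refine le_of_tendsto' htend ?_
    intro m
    exact (fold_contr ((List.range m).map Hs) a b ha hb).2
  -- setup for the first estimate
  set I := ⨅ w, f w with hI
  obtain ⟨w0, hw0⟩ := hfproper
  obtain ⟨c, hc⟩ := hfbdd
  have hIc : (c : EReal) ≤ I := le_iInf hc
  have hIw : I ≤ f w0 := iInf_le _ _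
  have hItop : I ≠ ⊤ := by
    intro h
    exact hw0 (top_le_iff.mp (h ▸ hIw))
  have hIbot : I ≠ ⊥ := by
    intro h
    rw [h] at hIc
    exact (EReal.coe_ne_bot c) (le_bot_iff.mp hIc)
  set r := I.toReal with hr
  have hIr : ((r : ℝ) : EReal) = I := EReal.coe_toReal hItop hIbot
  set d := ‖v - T ρ u‖ with hd
  have hdρ : d ≤ ρ := by
    have h1 : ((r : ℝ) : EReal) ≤ f v := hIr ▸ iInf_le _ _
    have h2 : f v ≤ ((r + ρ * σ - σ * d : ℝ) : EReal) := by
      calc f v ≤ f u - ((σ * d : ℝ) : EReal) := hv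
        _ ≤ (I + ((ρ * σ : ℝ) : EReal)) - ((σ * d : ℝ) : EReal) :=
            EReal.sub_le_sub hfu le_rfl
        _ = ((r + ρ * σ - σ * d : ℝ) : EReal) := by
            rw [← hIr, ← EReal.coe_add, ← EReal.coe_sub]
    have h3 : r ≤ r + ρ * σ - σ * d := EReal.coe_le_coe_iff.mp (h1.trans h2)
    have h4 : σ * d ≤ σ * ρ := by linarith
    exact le_of_mul_le_mul_left h4 hσ
  refine ⟨hdρ, ?_, ?_⟩
  · calc ‖v - u‖ ≤ ‖v - T ρ u‖ + ‖T ρ u - u‖ := norm_sub_le_norm_sub_add_norm_sub _ _ _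
      _ ≤ ρ + ‖T ρ u - u‖ := by linarith
  · set t := T ρ u with ht
    have htS : t ∈ S := hTS ρ hρ u hu
    have h1 : ‖ι v - ι t‖ ≤ K * ρ := by
      have := hιK (v - t)
      rw [map_sub] at this
      calc ‖ι v - ι t‖ ≤ K * ‖v - t‖ := this
        _ ≤ K * ρ := by
            have : ‖v - t‖ ≤ ρ := hdρ
            nlinarith
    have h2 : ‖ι t - ι (sy u)‖ < ρ := hTapprox ρ hρ u hu
    have h3 : ‖ι (sy u) - ι (sy v)‖ ≤ K * CΘ * ρ := by
      have hsv : sy v = sy (Θ v) := hsyext v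
      have hsu : sy u = sy t := (hTsy ρ hρ u hu).symm
      have hcontr : ‖ι (sy t) - ι (sy (Θ v))‖ ≤ ‖ι t - ι (Θ v)‖ :=
        sy_contr t htS (Θ v) (hΘS v)
      have hlip : ‖ι (Θ t) - ι (Θ v)‖ ≤ CΘ * ‖ι t - ι v‖ := hΘlip t v
      rw [hΘid t htS] at hlip
      have hnorm : ‖ι t - ι v‖ = ‖ι v - ι t‖ := norm_sub_rev _ _
      rw [hsv, hsu]
      calc ‖ι (sy t) - ι (sy (Θ v))‖ ≤ ‖ι t - ι (Θ v)‖ := hcontr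
        _ ≤ CΘ * ‖ι t - ι v‖ := hlip
        _ = CΘ * ‖ι v - ι t‖ := by rw [hnorm]
        _ ≤ K * CΘ * ρ := by nlinarith
    calc ‖ι v - ι (sy v)‖
        ≤ ‖ι v - ι t‖ + ‖ι t - ι (sy v)‖ := norm_sub_le_norm_sub_add_norm_sub _ _ _
      _ ≤ ‖ι v - ι t‖ + (‖ι t - ι (sy u)‖ + ‖ι (sy u) - ι (sy v)‖) := by
          have := norm_sub_le_norm_sub_add_norm_sub (ι t) (ι (sy u)) (ι (sy v))
          linarith
      _ < (K * (CΘ + 1) + 1) * ρ := by nlinarith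
end

section
/- Symmetric Zhong principle. In the abstract symmetrization framework, let X be a Banach space and let η : [0,+∞) → [0,+∞) be nondecreasing and continuous with ∫₀^{+∞} ds/(1+η(s)) = +∞. Assume that for some ρ₀ > 0 there is a function r : [0,ρ₀) → [0,+∞) with ∫₀^{r(ρ)} ds/(1+η(s)) ≥ ρ for all ρ ∈ (0,ρ₀) and r(ρ) → 0 as ρ → 0⁺. Let f : X → ℝ ∪ {+∞} be a proper, bounded below, lower semicontinuous functional such that f(u^H) ≤ f(u) for all u ∈ S and all H ∈ ℋ*. Let u ∈ S, ρ ∈ (0,ρ₀) and σ > 0 satisfy f(u) < inf_X f + σρ. Then there exists v ∈ X such that: (a) ‖v − v*‖_V < (K(C_Θ+1)+1)r(ρ); (b) f(v) ≤ f(u); (c) ‖v − u‖ ≤ r(ρ) + ‖T_{r(ρ)} u − u‖; (d) f(w) ≥ f(v) − σ‖w − v‖/(1 + η(‖v − T_{r(ρ)} u‖)) for all w ∈ X. -/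
/-!
Zhong's principle comes from a greedy descent with variable weights: starting at `x₀`, move
repeatedly to a point of `{w | g w + c z * d(w, z) ≤ g z}` that nearly minimizes `g` there, where
`c z = σ / (1 + η (d(z, x₀)))`. The potential `φ t = ∫₀ᵗ ds / (1 + η s)` grows along the iterates
by at most the weighted step lengths, whose sum is `< ρ ≤ φ R`, so the iterates stay in the ball
of radius `R`. There the weights are bounded below, so the sequence is Cauchy, and its limit has
the required minimality. An extended-real `f` is reduced to a real one by truncating it at a level
above `f x₀`.

For the symmetric version, run this from `x₀ = T_R u` with `R = r ρ`; `f x₀ ≤ f u`. Being a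
`V`-limit of iterated nonexpansive polarizations, the symmetrization is nonexpansive on `S`, hence
`C_Θ`-Lipschitz from `S` to `X` through `Θ`, and the triangle inequality through `x₀` and
`x₀* = u*` gives the bound on `‖v - v*‖`.
-/

open Filter Topology Metric Set

noncomputable def zhongPotential (η : ℝ → ℝ) (t : ℝ) : ℝ := ∫ s in (0:ℝ)..t, 1 / (1 + η s)

section ZhongPotential

variable {η : ℝ → ℝ} (hη0 : ∀ s, 0 ≤ s → 0 ≤ η s) (hηcont : ContinuousOn η (Ici 0))
include hη0 hηcont

lemma intervalIntegrable_one_div_one_add {a b : ℝ} (ha : 0 ≤ a) (hb : 0 ≤ b) :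
    IntervalIntegrable (fun s => 1 / (1 + η s)) MeasureTheory.volume a b := by
  refine (ContinuousOn.div continuousOn_const (continuousOn_const.add hηcont) ?_).mono ?_
    |>.intervalIntegrable
  · intro s hs
    exact (by linarith [hη0 s hs] : (0:ℝ) < 1 + η s).ne'
  · exact fun x hx => le_trans (le_min ha hb) hx.1

lemma zhongPotential_mono {x y : ℝ} (hx : 0 ≤ x) (hxy : x ≤ y) :
    zhongPotential η x ≤ zhongPotential η y := by
  have hint : ∀ {a b : ℝ}, 0 ≤ a → 0 ≤ b → IntervalIntegrable (fun s => 1 / (1 + η s)) _ a b :=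
    intervalIntegrable_one_div_one_add hη0 hηcont
  rw [← sub_nonneg, zhongPotential, zhongPotential,
    intervalIntegral.integral_interval_sub_left (hint le_rfl (hx.trans hxy)) (hint le_rfl hx)]
  refine intervalIntegral.integral_nonneg hxy fun s hs => ?_
  have : 0 ≤ η s := hη0 s (hx.trans hs.1)
  positivity

lemma zhongPotential_add_le (hηmono : MonotoneOn η (Ici 0)) {a d : ℝ} (ha : 0 ≤ a)
    (hd : 0 ≤ d) : zhongPotential η (a + d) ≤ zhongPotential η a + d / (1 + η a) := by
  have hint : ∀ {a b : ℝ}, 0 ≤ a → 0 ≤ b → IntervalIntegrable (fun s => 1 / (1 + η s)) _ a b :=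
    intervalIntegrable_one_div_one_add hη0 hηcont
  have hgap : zhongPotential η (a + d) - zhongPotential η a ≤ ∫ _ in a..(a + d), 1 / (1 + η a) := by
    rw [zhongPotential, zhongPotential,
      intervalIntegral.integral_interval_sub_left (hint le_rfl (by linarith)) (hint le_rfl ha)]
    refine intervalIntegral.integral_mono_on (by linarith) (hint ha (by linarith))
      intervalIntegrable_const fun s hs => ?_
    have hηa : 0 ≤ η a := hη0 a ha
    have hηs : η a ≤ η s := hηmono ha (ha.trans hs.1) hs.1
    gcongr
  simp only [intervalIntegral.integral_const, add_sub_cancel_left, smul_eq_mul] at hgap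
  rw [mul_one_div] at hgap
  linarith

end ZhongPotential

section Descent

variable {X : Type*} [PseudoMetricSpace X]

def descentSet (g c : X → ℝ) (z : X) : Set X := {w | g w + c z * dist w z ≤ g z}

def IsGreedyDescentSeq (g c : X → ℝ) (z : ℕ → X) : Prop :=
  ∀ n, z (n + 1) ∈ descentSet g c (z n) ∧
    g (z (n + 1)) < sInf (g '' descentSet g c (z n)) + (1 / 2) ^ n

variable {g c : X → ℝ}

lemma self_mem_descentSet (z : X) : z ∈ descentSet g c z := by
  simp [descentSet]

lemma exists_isGreedyDescentSeq (x₀ : X) : ∃ z, z 0 = x₀ ∧ IsGreedyDescentSeq g c z := by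
  have hnear (y : X) (n : ℕ) :
      ∃ w ∈ descentSet g c y, g w < sInf (g '' descentSet g c y) + (1 / 2) ^ n := by
    have hne : (g '' descentSet g c y).Nonempty := ⟨g y, y, self_mem_descentSet y, rfl⟩
    obtain ⟨_, ⟨w, hw, rfl⟩, hlt⟩ := Real.lt_sInf_add_pos hne (by positivity : (0:ℝ) < (1 / 2) ^ n)
    exact ⟨w, hw, hlt⟩
  choose F hFmem hFlt using hnear
  exact ⟨fun n => Nat.rec x₀ (fun n y => F y n) n, rfl, fun n => ⟨hFmem _ _, hFlt _ _⟩⟩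

namespace IsGreedyDescentSeq

variable {z : ℕ → X} (hz : IsGreedyDescentSeq g c z)
include hz

lemma add_le (n : ℕ) : g (z (n + 1)) + c (z n) * dist (z (n + 1)) (z n) ≤ g (z n) :=
  (hz n).1

lemma antitone (hc : ∀ x, 0 ≤ c x) : Antitone (g ∘ z) :=
  antitone_nat_of_succ_le fun n => by
    have := mul_nonneg (hc (z n)) (dist_nonneg (x := z (n + 1)) (y := z n))
    simp only [Function.comp_apply]
    linarith [hz.add_le n]

lemma sum_le (n : ℕ) :
    ∑ i ∈ Finset.range n, c (z i) * dist (z (i + 1)) (z i) ≤ g (z 0) - g (z n) := by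
  rw [← Finset.sum_range_sub' (fun i => g (z i))]
  exact Finset.sum_le_sum fun i _ => by linarith [hz.add_le i]

lemma cauchySeq (hg : BddBelow (range g)) {c₀ : ℝ} (hc₀ : 0 < c₀) (hc : ∀ n, c₀ ≤ c (z n)) :
    CauchySeq z := by
  obtain ⟨b, hb⟩ := hg
  have hsum (n : ℕ) : ∑ i ∈ Finset.range n, dist (z (i + 1)) (z i) ≤ (g (z 0) - b) / c₀ := by
    rw [le_div_iff₀ hc₀, Finset.sum_mul]
    calc ∑ i ∈ Finset.range n, dist (z (i + 1)) (z i) * c₀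
        ≤ ∑ i ∈ Finset.range n, c (z i) * dist (z (i + 1)) (z i) :=
          Finset.sum_le_sum fun i _ => by rw [mul_comm]; gcongr; exact hc i
      _ ≤ g (z 0) - g (z n) := hz.sum_le n
      _ ≤ g (z 0) - b := by linarith [hb ⟨z n, rfl⟩]
  exact cauchySeq_of_summable_dist <|
    (summable_of_sum_range_le (fun _ => dist_nonneg) hsum).congr fun n => dist_comm _ _

variable {v : X} (hv : Tendsto z atTop (𝓝 v)) (hg : LowerSemicontinuous g) (hc : ∀ x, 0 ≤ c x)
include hv hg hc

lemma le_of_tendsto (n : ℕ) : g v ≤ g (z n) := by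
  by_contra! hlt
  obtain ⟨m, hm, hnm⟩ := ((hv.eventually (hg v _ hlt)).and (eventually_ge_atTop n)).exists
  exact (hz.antitone hc hnm).not_gt hm

lemma sub_le_of_tendsto (hg_bdd : BddBelow (range g))
    (hcv : Tendsto (c ∘ z) atTop (𝓝 (c v))) (w : X) : g v - c v * dist w v ≤ g w := by
  by_contra! hlt
  have hw : ∀ᶠ n in atTop, c (z n) * dist w (z n) < g v - g w :=
    (hcv.mul (tendsto_const_nhds.dist hv)).eventually_lt_const (by linarith)
  have hwv : ∀ᶠ n in atTop, g v < g w + (1 / 2) ^ n := by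
    filter_upwards [hw] with n hn
    have hmem : w ∈ descentSet g c (z n) := by
      show g w + c (z n) * dist w (z n) ≤ g (z n)
      linarith [hz.le_of_tendsto hv hg hc n]
    have hinf : sInf (g '' descentSet g c (z n)) ≤ g w :=
      csInf_le (hg_bdd.mono (image_subset_range _ _)) ⟨w, hmem, rfl⟩
    linarith [(hz n).2, hz.le_of_tendsto hv hg hc (n + 1)]
  have hle : g v ≤ g w := ge_of_tendsto (by
    simpa using tendsto_const_nhds.add (tendsto_pow_atTop_nhds_zero_of_lt_one
      (by norm_num : (0:ℝ) ≤ 1 / 2) (by norm_num))) (hwv.mono fun _ h => h.le)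
  linarith [mul_nonneg (hc v) (dist_nonneg (x := w) (y := v))]

end IsGreedyDescentSeq

end Descent

lemma LowerSemicontinuous.exists_real_truncation {X : Type*} [TopologicalSpace X]
    {f : X → EReal} (hf : LowerSemicontinuous f) (hf_bdd : ∃ b : ℝ, ∀ x, (b : EReal) ≤ f x)
    (M : ℝ) : ∃ g : X → ℝ, LowerSemicontinuous g ∧ BddBelow (range g) ∧
      ∀ x, (g x : EReal) = min (f x) M := by
  obtain ⟨b, hb⟩ := hf_bdd
  have hcoe (x : X) : ((min (f x) M).toReal : EReal) = min (f x) M :=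
    EReal.coe_toReal ((min_le_right _ _).trans_lt (EReal.coe_lt_top M)).ne
      (lt_min ((EReal.bot_lt_coe b).trans_le (hb x)) (EReal.bot_lt_coe M)).ne'
  refine ⟨fun x => (min (f x) M).toReal, fun x y hy => ?_, ⟨min b M, ?_⟩, hcoe⟩
  · have hy' : (y : EReal) < min (f x) M := by rw [← hcoe]; exact_mod_cast hy
    filter_upwards [hf.inf lowerSemicontinuous_const x _ hy'] with x' hx'
    rw [← hcoe] at hx'
    exact_mod_cast hx'
  · rintro _ ⟨x, rfl⟩
    rw [← EReal.coe_le_coe_iff, hcoe]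
    exact le_min ((EReal.coe_le_coe_iff.mpr (min_le_left _ _)).trans (hb x))
      (EReal.coe_le_coe_iff.mpr (min_le_right _ _))

section Zhong

variable {X : Type*} [PseudoMetricSpace X] {η : ℝ → ℝ} (hη0 : ∀ s, 0 ≤ s → 0 ≤ η s)
  (hηmono : MonotoneOn η (Ici 0)) (hηcont : ContinuousOn η (Ici 0))
include hη0 hηmono hηcont

lemma zhongPotential_dist_le_sum (z : ℕ → X) (n : ℕ) :
    zhongPotential η (dist (z n) (z 0)) ≤
      ∑ i ∈ Finset.range n, dist (z (i + 1)) (z i) / (1 + η (dist (z i) (z 0))) := by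
  induction n with
  | zero => simp [zhongPotential]
  | succ n ih =>
    rw [Finset.sum_range_succ]
    calc zhongPotential η (dist (z (n + 1)) (z 0))
        ≤ zhongPotential η (dist (z n) (z 0) + dist (z (n + 1)) (z n)) :=
          zhongPotential_mono hη0 hηcont dist_nonneg
            (by linarith [dist_triangle (z (n + 1)) (z n) (z 0)])
      _ ≤ zhongPotential η (dist (z n) (z 0)) +
            dist (z (n + 1)) (z n) / (1 + η (dist (z n) (z 0))) :=
          zhongPotential_add_le hη0 hηcont hηmono dist_nonneg dist_nonneg
      _ ≤ _ := by linarith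

lemma IsGreedyDescentSeq.dist_le_of_le_zhongPotential {g : X → ℝ} {σ ρ R : ℝ} (hσ : 0 < σ)
    {z : ℕ → X} (hz : IsGreedyDescentSeq g (fun x => σ / (1 + η (dist x (z 0)))) z)
    (hz0 : ∀ w, g (z 0) < g w + σ * ρ) (hR : 0 ≤ R) (hint : ρ ≤ zhongPotential η R) (n : ℕ) :
    dist (z n) (z 0) ≤ R := by
  by_contra! hRn
  have hsum_lt : ∑ i ∈ Finset.range n, dist (z (i + 1)) (z i) / (1 + η (dist (z i) (z 0))) < ρ := by
    refine lt_of_mul_lt_mul_left ?_ hσ.le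
    calc σ * ∑ i ∈ Finset.range n, dist (z (i + 1)) (z i) / (1 + η (dist (z i) (z 0)))
        = ∑ i ∈ Finset.range n, σ / (1 + η (dist (z i) (z 0))) * dist (z (i + 1)) (z i) := by
          rw [Finset.mul_sum]
          exact Finset.sum_congr rfl fun i _ => by ring
      _ ≤ g (z 0) - g (z n) := hz.sum_le n
      _ < σ * ρ := by linarith [hz0 (z n)]
  linarith [zhongPotential_mono hη0 hηcont hR hRn.le,
    zhongPotential_dist_le_sum hη0 hηmono hηcont z n]

theorem exists_zhong_point [CompleteSpace X] {g : X → ℝ} (hg : LowerSemicontinuous g)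
    (hg_bdd : BddBelow (range g)) {σ ρ R : ℝ} (hσ : 0 < σ) (hR : 0 ≤ R)
    (hint : ρ ≤ zhongPotential η R) {x₀ : X} (hx₀ : ∀ w, g x₀ < g w + σ * ρ) :
    ∃ v, dist v x₀ ≤ R ∧ g v ≤ g x₀ ∧ ∀ w, g v - σ * dist w v / (1 + η (dist v x₀)) ≤ g w := by
  set c : X → ℝ := fun x => σ / (1 + η (dist x x₀)) with hc_def
  have hη1 (t : ℝ) (ht : 0 ≤ t) : 0 < 1 + η t := by linarith [hη0 t ht]
  have hc (x : X) : 0 ≤ c x := (div_pos hσ (hη1 _ dist_nonneg)).le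
  have hc_cont : Continuous c :=
    continuous_const.div (continuous_const.add (hηcont.comp_continuous
      (continuous_id.dist continuous_const) fun _ => dist_nonneg)) fun _ => (hη1 _ dist_nonneg).ne'
  obtain ⟨z, rfl, hz⟩ := exists_isGreedyDescentSeq (g := g) (c := c) x₀
  have hdist := hz.dist_le_of_le_zhongPotential hη0 hηmono hηcont hσ hx₀ hR hint
  have hc₀ (n : ℕ) : σ / (1 + η R) ≤ c (z n) :=
    div_le_div_of_nonneg_left hσ.le (hη1 _ dist_nonneg)
      (by linarith [hηmono (mem_Ici.mpr dist_nonneg) (mem_Ici.mpr hR) (hdist n)])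
  obtain ⟨v, hv⟩ := cauchySeq_tendsto_of_complete
    (hz.cauchySeq hg_bdd (div_pos hσ (hη1 R hR)) hc₀)
  refine ⟨v, le_of_tendsto (hv.dist tendsto_const_nhds) (Eventually.of_forall hdist),
    hz.le_of_tendsto hv hg hc 0, fun w => ?_⟩
  have hmin := hz.sub_le_of_tendsto hv hg hc hg_bdd ((hc_cont.tendsto v).comp hv) w
  rwa [hc_def, div_mul_eq_mul_div] at hmin

theorem exists_zhong_point_ereal [CompleteSpace X] {f : X → EReal} (hf : LowerSemicontinuous f)
    (hf_bdd : ∃ b : ℝ, ∀ x, (b : EReal) ≤ f x) {σ ρ R : ℝ} (hσ : 0 < σ) (hρ : 0 < ρ) (hR : 0 ≤ R)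
    (hint : ρ ≤ zhongPotential η R) {x₀ : X}
    (hx₀ : f x₀ < (⨅ w, f w) + ((σ * ρ : ℝ) : EReal)) :
    ∃ v, dist v x₀ ≤ R ∧ f v ≤ f x₀ ∧
      ∀ w, f v - ((σ * dist w v / (1 + η (dist v x₀)) : ℝ) : EReal) ≤ f w := by
  obtain ⟨M, hx₀M, -⟩ := EReal.exists_between_coe_real (hx₀.trans_le le_top)
  obtain ⟨g, hg, hg_bdd, hgf⟩ := hf.exists_real_truncation hf_bdd M
  have hgx₀ : (g x₀ : EReal) = f x₀ := by rw [hgf, min_eq_left hx₀M.le]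
  have hx₀' (w : X) : g x₀ < g w + σ * ρ := by
    rw [← EReal.coe_lt_coe_iff, EReal.coe_add, hgx₀, hgf]
    rcases le_total (f w) M with h | h
    · rw [min_eq_left h]
      exact hx₀.trans_le (add_le_add_left (iInf_le _ w) _)
    · rw [min_eq_right h]
      exact hx₀M.trans_le (le_add_of_nonneg_right (by exact_mod_cast (mul_pos hσ hρ).le))
  obtain ⟨v, hvx₀, hgv, hv⟩ := exists_zhong_point hη0 hηmono hηcont hg hg_bdd hσ hR hint hx₀'
  have hfv : f v ≤ f x₀ := by
    have : min (f v) M ≤ f x₀ := by rw [← hgf, ← hgx₀]; exact_mod_cast hgv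
    exact (min_le_iff.mp this).resolve_right (not_le.mpr hx₀M)
  have hgv' : (g v : EReal) = f v := by rw [hgf, min_eq_left (hfv.trans hx₀M.le)]
  refine ⟨v, hvx₀, hfv, fun w => ?_⟩
  rw [← hgv', ← EReal.coe_sub]
  exact (EReal.coe_le_coe_iff.mpr (hv w)).trans ((hgf w).trans_le (min_le_left _ _))

end Zhong

section Polarization

variable {X P : Type*} {S : Set X} {pol : X → P → X}
  (hpolS : ∀ u ∈ S, ∀ H : P, pol u H ∈ S)
include hpolS

lemma foldl_mem (l : List P) {a : X} (ha : a ∈ S) : l.foldl pol a ∈ S := by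
  induction l generalizing a with
  | nil => exact ha
  | cons H l ih => exact ih (hpolS a ha H)

lemma foldl_le {β : Type*} [Preorder β] {f : X → β} (hfpol : ∀ u ∈ S, ∀ H : P, f (pol u H) ≤ f u)
    (l : List P) {a : X} (ha : a ∈ S) : f (l.foldl pol a) ≤ f a := by
  induction l generalizing a with
  | nil => exact le_rfl
  | cons H l ih => exact (ih (hpolS a ha H)).trans (hfpol a ha H)

variable {V : Type*} [SeminormedAddCommGroup V] {ι : X → V}
  (hpolContr : ∀ u ∈ S, ∀ v ∈ S, ∀ H : P, ‖ι (pol u H) - ι (pol v H)‖ ≤ ‖ι u - ι v‖)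
include hpolContr

lemma norm_foldl_sub_foldl_le (l : List P) {a b : X} (ha : a ∈ S) (hb : b ∈ S) :
    ‖ι (l.foldl pol a) - ι (l.foldl pol b)‖ ≤ ‖ι a - ι b‖ := by
  induction l generalizing a b with
  | nil => exact le_rfl
  | cons H l ih =>
    exact (ih (hpolS a ha H) (hpolS b hb H)).trans (hpolContr a ha b hb H)

variable {sy : X → X}
  (happrox : ∃ Hs : ℕ → P, ∀ u ∈ S,
    Tendsto (fun m => ι (List.foldl pol u ((List.range m).map Hs))) atTop (𝓝 (ι (sy u))))
include happrox

lemma norm_sy_sub_sy_le_of_mem {a b : X} (ha : a ∈ S) (hb : b ∈ S) :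
    ‖ι (sy a) - ι (sy b)‖ ≤ ‖ι a - ι b‖ := by
  obtain ⟨Hs, hHs⟩ := happrox
  exact le_of_tendsto ((hHs a ha).sub (hHs b hb)).norm
    (Eventually.of_forall fun m => norm_foldl_sub_foldl_le hpolS hpolContr _ ha hb)

lemma norm_sy_sub_sy_le {Θ : X → X} {CΘ : ℝ} (hΘS : ∀ u, Θ u ∈ S) (hΘid : ∀ u ∈ S, Θ u = u)
    (hΘlip : ∀ u v, ‖ι (Θ u) - ι (Θ v)‖ ≤ CΘ * ‖ι u - ι v‖) (hsyext : ∀ u, sy u = sy (Θ u))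
    {a : X} (ha : a ∈ S) (b : X) : ‖ι (sy a) - ι (sy b)‖ ≤ CΘ * ‖ι a - ι b‖ :=
  calc ‖ι (sy a) - ι (sy b)‖ = ‖ι (sy a) - ι (sy (Θ b))‖ := by rw [← hsyext]
    _ ≤ ‖ι (Θ a) - ι (Θ b)‖ := by
      rw [hΘid a ha]; exact norm_sy_sub_sy_le_of_mem hpolS hpolContr happrox ha (hΘS b)
    _ ≤ CΘ * ‖ι a - ι b‖ := hΘlip a b

lemma norm_sub_sy_lt_s8 {Θ : X → X} {CΘ : ℝ} (hCΘ : 0 ≤ CΘ) (hΘS : ∀ u, Θ u ∈ S)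
    (hΘid : ∀ u ∈ S, Θ u = u) (hΘlip : ∀ u v, ‖ι (Θ u) - ι (Θ v)‖ ≤ CΘ * ‖ι u - ι v‖)
    (hsyext : ∀ u, sy u = sy (Θ u)) {x y : X} (hx : x ∈ S) {ε δ : ℝ}
    (hxε : ‖ι x - ι (sy x)‖ < ε) (hyδ : ‖ι y - ι x‖ ≤ δ) :
    ‖ι y - ι (sy y)‖ < δ + ε + CΘ * δ := by
  have hsy : ‖ι (sy x) - ι (sy y)‖ ≤ CΘ * δ := by
    refine (norm_sy_sub_sy_le hpolS hpolContr happrox hΘS hΘid hΘlip hsyext hx y).trans ?_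
    rw [norm_sub_rev]
    gcongr
  linarith [norm_sub_le_norm_sub_add_norm_sub (ι y) (ι x) (ι (sy y)),
    norm_sub_le_norm_sub_add_norm_sub (ι x) (ι (sy x)) (ι (sy y))]

end Polarization

theorem symmetric_zhong_general
    {X : Type*} [NormedAddCommGroup X] [NormedSpace ℝ X] [CompleteSpace X]
    {V : Type*} [NormedAddCommGroup V] [NormedSpace ℝ V]
    (ι : X →L[ℝ] V)
    (K : ℝ) (hK : 0 < K) (hιK : ∀ u : X, ‖ι u‖ ≤ K * ‖u‖)
    (S : Set X)
    {P : Type*}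
    (pol : X → P → X) (sy : X → X)
    (hpolS : ∀ u ∈ S, ∀ H : P, pol u H ∈ S)
    (happrox : ∃ Hs : ℕ → P, ∀ u ∈ S,
      Filter.Tendsto (fun m => ι (List.foldl pol u ((List.range m).map Hs)))
        Filter.atTop (nhds (ι (sy u))))
    (hpolContr : ∀ u ∈ S, ∀ v ∈ S, ∀ H : P, ‖ι (pol u H) - ι (pol v H)‖ ≤ ‖ι u - ι v‖)
    (Θ : X → X) (CΘ : ℝ) (hCΘ : 0 < CΘ)
    (hΘS : ∀ u : X, Θ u ∈ S) (hΘid : ∀ u ∈ S, Θ u = u)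
    (hΘlip : ∀ u v : X, ‖ι (Θ u) - ι (Θ v)‖ ≤ CΘ * ‖ι u - ι v‖)
    (hsyext : ∀ u : X, sy u = sy (Θ u))
    (T : ℝ → X → X)
    (hTS : ∀ ρ > (0:ℝ), ∀ u ∈ S, T ρ u ∈ S)
    (hTpol : ∀ ρ > (0:ℝ), ∀ u ∈ S, ∃ l : List P, T ρ u = List.foldl pol u l)
    (hTsy : ∀ ρ > (0:ℝ), ∀ u ∈ S, sy (T ρ u) = sy u)
    (hTapprox : ∀ ρ > (0:ℝ), ∀ u ∈ S, ‖ι (T ρ u) - ι (sy u)‖ < ρ)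
    (η : ℝ → ℝ) (hηnonneg : ∀ s : ℝ, 0 ≤ s → 0 ≤ η s)
    (hηmono : MonotoneOn η (Set.Ici 0)) (hηcont : ContinuousOn η (Set.Ici 0))
    (ρ₀ : ℝ) (r : ℝ → ℝ) (hrnonneg : ∀ ρ ∈ Set.Ico (0:ℝ) ρ₀, 0 ≤ r ρ)
    (hrint : ∀ ρ ∈ Set.Ioo (0:ℝ) ρ₀, ρ ≤ ∫ s in (0:ℝ)..(r ρ), 1 / (1 + η s))
    (f : X → EReal)
    (hfbdd : ∃ c : ℝ, ∀ u, (c : EReal) ≤ f u)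
    (hflsc : LowerSemicontinuous f)
    (hfpol : ∀ u ∈ S, ∀ H : P, f (pol u H) ≤ f u)
    (u : X) (hu : u ∈ S) (ρ σ : ℝ) (hρ : ρ ∈ Set.Ioo 0 ρ₀) (hσ : 0 < σ)
    (hfu : f u < (⨅ w, f w) + ((σ * ρ : ℝ) : EReal)) :
    ∃ v : X,
      ‖ι v - ι (sy v)‖ < (K * (CΘ + 1) + 1) * r ρ ∧
      f v ≤ f u ∧
      ‖v - u‖ ≤ r ρ + ‖T (r ρ) u - u‖ ∧
      (∀ w : X, f v - ((σ * ‖w - v‖ / (1 + η ‖v - T (r ρ) u‖) : ℝ) : EReal) ≤ f w) := by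
  obtain ⟨hρpos, hρlt⟩ := hρ
  have hR : 0 ≤ r ρ := hrnonneg ρ ⟨hρpos.le, hρlt⟩
  have hint : ρ ≤ zhongPotential η (r ρ) := hrint ρ ⟨hρpos, hρlt⟩
  have hRpos : 0 < r ρ := hR.lt_of_ne fun h => by
    rw [← h, zhongPotential, intervalIntegral.integral_same] at hint; linarith
  set x₀ := T (r ρ) u with hx₀
  have hx₀S : x₀ ∈ S := hTS _ hRpos u hu
  have hfx₀ : f x₀ ≤ f u := by
    obtain ⟨l, hl⟩ := hTpol _ hRpos u hu
    rw [hx₀, hl]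
    exact foldl_le hpolS hfpol l hu
  obtain ⟨v, hvx₀, hfv, hv⟩ := exists_zhong_point_ereal hηnonneg hηmono hηcont hflsc hfbdd hσ
    hρpos hR hint (hfx₀.trans_lt hfu)
  rw [dist_eq_norm] at hvx₀
  have hιv : ‖ι v - ι x₀‖ ≤ K * r ρ := by
    rw [← map_sub]
    exact (hιK _).trans (by gcongr)
  have hx₀sy : ‖ι x₀ - ι (sy x₀)‖ < r ρ := by
    rw [hx₀, hTsy _ hRpos u hu]
    exact hTapprox _ hRpos u hu
  refine ⟨v, ?_, hfv.trans hfx₀, ?_, fun w => by simpa only [dist_eq_norm] using hv w⟩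
  · calc ‖ι v - ι (sy v)‖ < K * r ρ + r ρ + CΘ * (K * r ρ) :=
          norm_sub_sy_lt_s8 hpolS hpolContr happrox hCΘ.le hΘS hΘid hΘlip hsyext hx₀S hx₀sy hιv
      _ = (K * (CΘ + 1) + 1) * r ρ := by ring
  · exact (norm_sub_le_norm_sub_add_norm_sub v x₀ u).trans (by gcongr)

theorem symmetric_zhong
    {X : Type*} [NormedAddCommGroup X] [NormedSpace ℝ X] [CompleteSpace X]
    {V : Type*} [NormedAddCommGroup V] [NormedSpace ℝ V] [CompleteSpace V]
    {W : Type*} [NormedAddCommGroup W] [NormedSpace ℝ W] [CompleteSpace W]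
    (ι : X →L[ℝ] V) (κ : V →L[ℝ] W)
    (K : ℝ) (hK : 0 < K) (hιK : ∀ u : X, ‖ι u‖ ≤ K * ‖u‖)
    (S : Set X)
    {P : Type*} [TopologicalSpace P] [PathConnectedSpace P]
    (pol : X → P → X) (sy : X → X)
    (hpolS : ∀ u ∈ S, ∀ H : P, pol u H ∈ S)
    (hsyS : ∀ u : X, sy u ∈ S)
    (hpolCont : ContinuousOn (fun q : X × P => pol q.1 q.2) (S ×ˢ Set.univ))
    (hsypol : ∀ u ∈ S, ∀ H : P,
      pol (sy u) H = sy u ∧ sy (pol u H) = sy u ∧ pol (pol u H) H = pol u H)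
    (happrox : ∃ Hs : ℕ → P, ∀ u ∈ S,
      Filter.Tendsto (fun m => ι (List.foldl pol u ((List.range m).map Hs)))
        Filter.atTop (nhds (ι (sy u))))
    (hpolContr : ∀ u ∈ S, ∀ v ∈ S, ∀ H : P, ‖ι (pol u H) - ι (pol v H)‖ ≤ ‖ι u - ι v‖)
    (Θ : X → X) (CΘ : ℝ) (hCΘ : 0 < CΘ)
    (hΘS : ∀ u : X, Θ u ∈ S) (hΘid : ∀ u ∈ S, Θ u = u)
    (hΘlip : ∀ u v : X, ‖ι (Θ u) - ι (Θ v)‖ ≤ CΘ * ‖ι u - ι v‖)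
    (hpolext : ∀ u : X, ∀ H : P, pol u H = pol (Θ u) H)
    (hsyext : ∀ u : X, sy u = sy (Θ u))
    (T : ℝ → X → X)
    (hTS : ∀ ρ > (0:ℝ), ∀ u ∈ S, T ρ u ∈ S)
    (hTpol : ∀ ρ > (0:ℝ), ∀ u ∈ S, ∃ l : List P, T ρ u = List.foldl pol u l)
    (hTsy : ∀ ρ > (0:ℝ), ∀ u ∈ S, sy (T ρ u) = sy u)
    (hTapprox : ∀ ρ > (0:ℝ), ∀ u ∈ S, ‖ι (T ρ u) - ι (sy u)‖ < ρ)
    (η : ℝ → ℝ) (hηnonneg : ∀ s : ℝ, 0 ≤ s → 0 ≤ η s)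
    (hηmono : MonotoneOn η (Set.Ici 0)) (hηcont : ContinuousOn η (Set.Ici 0))
    (hηdiv : Filter.Tendsto (fun R : ℝ => ∫ s in (0:ℝ)..R, 1 / (1 + η s))
      Filter.atTop Filter.atTop)
    (ρ₀ : ℝ) (hρ₀ : 0 < ρ₀) (r : ℝ → ℝ) (hrnonneg : ∀ ρ ∈ Set.Ico (0:ℝ) ρ₀, 0 ≤ r ρ)
    (hrint : ∀ ρ ∈ Set.Ioo (0:ℝ) ρ₀, ρ ≤ ∫ s in (0:ℝ)..(r ρ), 1 / (1 + η s))
    (hrlim : Filter.Tendsto r (nhdsWithin 0 (Set.Ioi 0)) (nhds 0))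
    (f : X → EReal)
    (hfproper : ∃ u, f u ≠ ⊤)
    (hfbdd : ∃ c : ℝ, ∀ u, (c : EReal) ≤ f u)
    (hflsc : LowerSemicontinuous f)
    (hfpol : ∀ u ∈ S, ∀ H : P, f (pol u H) ≤ f u)
    (u : X) (hu : u ∈ S) (ρ σ : ℝ) (hρ : ρ ∈ Set.Ioo 0 ρ₀) (hσ : 0 < σ)
    (hfu : f u < (⨅ w, f w) + ((σ * ρ : ℝ) : EReal)) :
    ∃ v : X,
      ‖ι v - ι (sy v)‖ < (K * (CΘ + 1) + 1) * r ρ ∧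
      f v ≤ f u ∧
      ‖v - u‖ ≤ r ρ + ‖T (r ρ) u - u‖ ∧
      (∀ w : X, f v - ((σ * ‖w - v‖ / (1 + η ‖v - T (r ρ) u‖) : ℝ) : EReal) ≤ f w) :=
  symmetric_zhong_general ι K hK hιK S pol sy hpolS happrox hpolContr Θ CΘ hCΘ hΘS hΘid hΘlip hsyext
    T hTS hTpol hTsy hTapprox η hηnonneg hηmono hηcont ρ₀ r hrnonneg hrint f hfbdd hflsc hfpol u hu
    ρ σ hρ hσ hfu
end
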